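/- arXiv:2001.06446 — 6 statements merged into one kernel-verified Lean document; each statement's English description precedes it below -/
import Mathlib

section
/- If a k-germ ω is alternating then so is δω: if for every permutation σ of {0,…,k} and every k-simplex S one has ⟨σS, ω⟩ = sign(σ)·⟨S, ω⟩, then for every permutation σ of {0,…,k+1} and every (k+1)-simplex T one has ⟨σT, δω⟩ = sign(σ)·⟨T, δω⟩. -/
/-- The euclidean space `ℝ^d` in which simplices live. -/
abbrev Pt (d : ℕ) := EuclideanSpace ℝ (Fin d)

/-- The coboundary of a germ, dual to the alternating-sum boundary operator. -/
noncomputable def cobdry {d n : ℕ} (ω : (Fin n → Pt d) → ℝ) :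
    (Fin (n + 1) → Pt d) → ℝ :=
  fun T => ∑ i : Fin (n + 1), (-1 : ℝ) ^ (i : ℕ) * ω (T ∘ i.succAbove)

/-! Adjacent transpositions generate the symmetric group, so it suffices to show that `δω`
changes sign when two consecutive vertices `i, i + 1` of `T` are swapped. Reindexing the
alternating sum by the same transposition, the faces opposite `i` and `i + 1` trade places,
which flips the sign `(-1)^i`; every other face contains both vertices, swapped, so there the
sign comes from `ω` being alternating. -/

open Equiv Equiv.Perm

def IsAlternatingGerm {α R : Type*} [Ring R] {n : ℕ} (f : (Fin n → α) → R) : Prop :=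
  ∀ σ : Perm (Fin n), ∀ S : Fin n → α, f (S ∘ ⇑σ⁻¹) = ((sign σ : ℤ) : R) * f S

theorem Fin.swap_castSucc_succ_comp_succAbove_succ {n : ℕ} (i : Fin (n + 1)) :
    swap i.castSucc i.succ ∘ i.succ.succAbove = i.castSucc.succAbove := by
  ext x
  simp only [Function.comp_apply, swap_apply_def, Fin.succAbove, Fin.lt_def]
  split_ifs <;> simp_all [Fin.ext_iff] <;> omega

theorem Fin.swap_castSucc_succ_comp_succAbove_castSucc {n : ℕ} (i : Fin (n + 1)) :
    swap i.castSucc i.succ ∘ i.castSucc.succAbove = i.succ.succAbove := by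
  ext x
  rw [← swap_castSucc_succ_comp_succAbove_succ, Function.comp_apply, Function.comp_apply,
    swap_apply_self]

namespace IsAlternatingGerm

variable {α R : Type*} [Ring R] {n : ℕ} {f : (Fin n → α) → R}

theorem comp_swap (hf : IsAlternatingGerm f) {a b : Fin n} (hab : a ≠ b) (S : Fin n → α) :
    f (S ∘ swap a b) = -f S := by
  simpa [sign_swap hab] using hf (swap a b) S

theorem of_comp_swap_castSucc_succ {f : (Fin (n + 1) → α) → R}
    (hf : ∀ (i : Fin n) (S : Fin (n + 1) → α), f (S ∘ swap i.castSucc i.succ) = -f S) :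
    IsAlternatingGerm f := by
  intro σ
  have hσ := (mclosure_swap_castSucc_succ n).ge (Submonoid.mem_top σ)
  induction hσ using Submonoid.closure_induction with
  | mem _ hσ =>
    obtain ⟨i, rfl⟩ := hσ
    intro S
    simp [hf, sign_swap (Fin.castSucc_lt_succ (i := i)).ne]
  | one => simp
  | mul σ τ _ _ hσ hτ =>
    intro S
    rw [mul_inv_rev, coe_mul, ← Function.comp_assoc, hσ, hτ, map_mul, Units.val_mul,
      Int.cast_mul, mul_assoc]

end IsAlternatingGerm

theorem cobdry_comp_swap_castSucc_succ {d k : ℕ} {ω : (Fin (k + 1) → Pt d) → ℝ}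
    (hω : IsAlternatingGerm ω) (i : Fin (k + 1)) (T : Fin (k + 2) → Pt d) :
    cobdry ω (T ∘ swap i.castSucc i.succ) = -cobdry ω T := by
  have hface : ∀ m : Fin (k + 2), (-1 : ℝ) ^ (swap i.castSucc i.succ m : ℕ) *
      ω ((T ∘ swap i.castSucc i.succ) ∘ (swap i.castSucc i.succ m).succAbove)
      = -((-1) ^ (m : ℕ) * ω (T ∘ m.succAbove)) := by
    intro m
    rcases eq_or_ne m i.castSucc with rfl | hm₁
    · rw [swap_apply_left, Function.comp_assoc, Fin.swap_castSucc_succ_comp_succAbove_succ]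
      simp [pow_succ]
    rcases eq_or_ne m i.succ with rfl | hm₂
    · rw [swap_apply_right, Function.comp_assoc, Fin.swap_castSucc_succ_comp_succAbove_castSucc]
      simp [pow_succ]
    obtain ⟨a, ha⟩ := Fin.exists_succAbove_eq hm₁.symm
    obtain ⟨b, hb⟩ := Fin.exists_succAbove_eq hm₂.symm
    have hab : a ≠ b := by rintro rfl; exact (Fin.castSucc_lt_succ (i := i)).ne (ha.symm.trans hb)
    rw [swap_apply_of_ne_of_ne hm₁ hm₂, Function.comp_assoc, ← ha, ← hb,
      Fin.succAbove_right_injective.swap_comp, ← Function.comp_assoc, hω.comp_swap hab, mul_neg]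
  simp only [cobdry]
  rw [← Equiv.sum_comp (swap i.castSucc i.succ), ← Finset.sum_neg_distrib]
  exact Finset.sum_congr rfl fun m _ => hface m

theorem IsAlternatingGerm.cobdry {d k : ℕ} {ω : (Fin (k + 1) → Pt d) → ℝ}
    (hω : IsAlternatingGerm ω) : IsAlternatingGerm (cobdry ω) :=
  of_comp_swap_castSucc_succ (cobdry_comp_swap_castSucc_succ hω)

/-- If a `k`-germ `ω` is alternating, i.e. `⟨σS, ω⟩ = sign(σ)·⟨S, ω⟩` for every
permutation `σ` of `{0,…,k}` (acting by `σ[p₀…p_k] = [p_{σ⁻¹(0)}…p_{σ⁻¹(k)}]`),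
then so is `δω`. -/
theorem cobdry_alternating {d k : ℕ} (ω : (Fin (k + 1) → Pt d) → ℝ)
    (halt : ∀ σ : Equiv.Perm (Fin (k + 1)), ∀ S : Fin (k + 1) → Pt d,
      ω (S ∘ ⇑σ⁻¹) = ((Equiv.Perm.sign σ : ℤ) : ℝ) * ω S) :
    ∀ σ : Equiv.Perm (Fin (k + 2)), ∀ T : Fin (k + 2) → Pt d,
      cobdry ω (T ∘ ⇑σ⁻¹) = ((Equiv.Perm.sign σ : ℤ) : ℝ) * cobdry ω T :=
  IsAlternatingGerm.cobdry halt
end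

section
/- A k-germ ω is regular if and only if both ω and δω are nonatomic, where a j-germ is nonatomic if it vanishes on all j-simplices of zero j-dimensional volume, and regular means nonatomic and closed on every affine k-plane (the algebraic pull-back by every affine map φ: I ⊆ ℝ^k → D has vanishing coboundary). -/
/-- The `k`-dimensional volume of a `k`-simplex `[p₀ … p_k]` in `ℝ^d`:
`vol_k(S) = (1/k!) √(det (P Pᵀ))` where `P_{ij} = (pᵢ − p₀)_j`. -/
noncomputable def vol {d k : ℕ} (S : Fin (k + 1) → Pt d) : ℝ :=
  (1 / (Nat.factorial k : ℝ)) *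
    Real.sqrt (Matrix.det (Matrix.of fun i j : Fin k =>
      ∑ m : Fin d, (S i.succ m - S 0 m) * (S j.succ m - S 0 m)))

/-- A `k`-germ on `D` is nonatomic if it vanishes on every `k`-simplex in `D`
(convex hull of vertices contained in `D`) of zero `k`-volume. -/
def Nonatomic {d k : ℕ} (D : Set (Pt d)) (ω : (Fin (k + 1) → Pt d) → ℝ) : Prop :=
  ∀ S : Fin (k + 1) → Pt d, convexHull ℝ (Set.range S) ⊆ D → vol S = 0 → ω S = 0

/-- A `k`-germ on `D` is closed on `k`-planes if the algebraic pull-back `φ^♮ω`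
by every affine map `φ : ℝ^k → ℝ^d` has vanishing coboundary on simplices mapped
into `D`. -/
def ClosedOnPlanes {d k : ℕ} (D : Set (Pt d)) (ω : (Fin (k + 1) → Pt d) → ℝ) : Prop :=
  ∀ φ : (Fin k → ℝ) →ᵃ[ℝ] Pt d, ∀ T : Fin (k + 2) → (Fin k → ℝ),
    convexHull ℝ (Set.range fun i => φ (T i)) ⊆ D →
      cobdry (fun S : Fin (k + 1) → Pt k => ω (fun i => φ (WithLp.ofLp (S i))))
        (fun i => WithLp.toLp 2 (T i)) = 0

open Module Set

theorem Submodule.exists_linearMap_range_eq {K V : Type*} [Field K] [AddCommGroup V]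
    [Module K V] (W : Submodule K V) [FiniteDimensional K W] {n : ℕ} (h : finrank K W ≤ n) :
    ∃ ℓ : (Fin n → K) →ₗ[K] V, LinearMap.range ℓ = W := by
  refine ⟨(W.subtype ∘ₗ (finBasis K W).equivFun.symm.toLinearMap) ∘ₗ
    LinearMap.funLeft K K (Fin.castLE h), ?_⟩
  rw [LinearMap.range_comp_of_range_eq_top _
      (LinearMap.range_eq_top.2 (LinearMap.funLeft_surjective_of_injective _ _ _
        (Fin.castLE_injective h))),
    LinearMap.range_comp_of_range_eq_top _ (LinearEquiv.range _), Submodule.range_subtype]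

theorem exists_affineMap_comp_eq_of_finrank_vectorSpan_le {K V ι : Type*} [Field K]
    [AddCommGroup V] [Module K V] [Finite ι] [Nonempty ι] (S : ι → V) {n : ℕ}
    (h : finrank K (vectorSpan K (range S)) ≤ n) :
    ∃ (φ : (Fin n → K) →ᵃ[K] V) (T : ι → Fin n → K), φ ∘ T = S := by
  obtain ⟨i₀⟩ := ‹Nonempty ι›
  obtain ⟨ℓ, hℓ⟩ := (vectorSpan K (range S)).exists_linearMap_range_eq h
  have hmem : ∀ i, S i - S i₀ ∈ LinearMap.range ℓ := fun i =>
    hℓ ▸ vsub_mem_vectorSpan K (mem_range_self i) (mem_range_self i₀)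
  choose T hT using hmem
  exact ⟨ℓ.toAffineMap + AffineMap.const K _ (S i₀), T, funext fun i => by simp [hT]⟩

theorem not_affineIndependent_affineMap_comp {K V P ι : Type*} [Field K] [AddCommGroup V]
    [Module K V] [AddTorsor V P] [Fintype ι] {n : ℕ} (hι : Fintype.card ι = n + 2)
    (φ : (Fin n → K) →ᵃ[K] P) (T : ι → Fin n → K) : ¬AffineIndependent K (φ ∘ T) := by
  rw [← finrank_vectorSpan_le_iff_not_affineIndependent K _ hι, range_comp,
    ← AffineMap.map_vectorSpan]
  calc finrank K ((vectorSpan K (range T)).map φ.linear)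
      ≤ finrank K (vectorSpan K (range T)) := Submodule.finrank_map_le _ _
    _ ≤ n := (Submodule.finrank_le _).trans (finrank_fin_fun K).le

theorem affineIndependent_iff_linearIndependent_vsub_zero {K V P : Type*} [Ring K]
    [AddCommGroup V] [Module K V] [AddTorsor V P] {n : ℕ} (p : Fin (n + 1) → P) :
    AffineIndependent K p ↔ LinearIndependent K fun i : Fin n => p i.succ -ᵥ p 0 := by
  rw [affineIndependent_iff_linearIndependent_vsub K p 0,
    ← linearIndependent_equiv (finSuccAboveEquiv 0)]
  rfl

theorem vol_eq_mul_sqrt_det_gram {d k : ℕ} (S : Fin (k + 1) → Pt d) :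
    vol S = 1 / (k.factorial : ℝ) * √(Matrix.gram ℝ fun i : Fin k => S i.succ -ᵥ S 0).det := by
  unfold vol
  congr 4
  ext i j
  simp [PiLp.inner_apply, mul_comm]

theorem vol_eq_zero_iff_not_affineIndependent {d k : ℕ} (S : Fin (k + 1) → Pt d) :
    vol S = 0 ↔ ¬AffineIndependent ℝ S := by
  rw [vol_eq_mul_sqrt_det_gram, affineIndependent_iff_linearIndependent_vsub_zero,
    ← Matrix.det_gram_ne_zero_iff_linearIndependent, not_not, mul_eq_zero,
    Real.sqrt_eq_zero ((Matrix.posSemidef_gram ℝ _).det_nonneg)]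
  simp [Nat.factorial_ne_zero]

/-- A `k`-germ `ω` is regular (nonatomic and closed on `k`-planes) if and only if
both `ω` and `δω` are nonatomic. -/
theorem regular_iff_nonatomic {d k : ℕ} (D : Set (Pt d))
    (ω : (Fin (k + 1) → Pt d) → ℝ) :
    (Nonatomic D ω ∧ ClosedOnPlanes D ω) ↔
      (Nonatomic D ω ∧ Nonatomic D (cobdry ω)) := by
  refine and_congr_right fun _ => ⟨fun hclosed S hS hvol => ?_, fun hδ φ T hT => ?_⟩
  · have hS_flat := (finrank_vectorSpan_le_iff_not_affineIndependent ℝ S (Fintype.card_fin _)).2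
      ((vol_eq_zero_iff_not_affineIndependent S).1 hvol)
    obtain ⟨φ, T, rfl⟩ := exists_affineMap_comp_eq_of_finrank_vectorSpan_le S hS_flat
    exact hclosed φ T hS
  · exact hδ _ hT ((vol_eq_zero_iff_not_affineIndependent _).2
      (not_affineIndependent_affineMap_comp (Fintype.card_fin _) φ T))
end

section
/- Permutation maps on simplices are decomposable: for any permutation σ of {0,…,k}, there exist a chain-valued map ν on k-simplices that is a linear combination of maps with values in simplices of zero k-volume, and a geometric map ρ from k-simplices to (k+1)-chains, such that σ − sign(σ)·Id = ν + ∂ρ as maps from k-simplices to k-chains. Consequently, if ω is any closed and nonatomic k-germ, then ⟨σS, ω⟩ = sign(σ)·⟨S, ω⟩ for every k-simplex S. -/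
/-- The boundary of a `(k+1)`-simplex as a `k`-chain. -/
noncomputable def bdryChain {d k : ℕ} (S : Fin (k + 2) → Pt d) :
    (Fin (k + 1) → Pt d) →₀ ℝ :=
  ∑ i : Fin (k + 2), (-1 : ℝ) ^ (i : ℕ) • Finsupp.single (S ∘ i.succAbove) (1 : ℝ)

open Finset

section

variable {d k : ℕ}

theorem vol_eq_zero_of_apply_eq {S : Fin (k + 1) → Pt d} {a b : Fin (k + 1)} (hab : a ≠ b)
    (h : S a = S b) : vol S = 0 := by
  wlog hb : b ≠ 0 generalizing a b
  · exact this hab.symm h.symm (not_not.1 hb ▸ hab)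
  obtain ⟨b, rfl⟩ := Fin.exists_succ_eq.2 hb
  suffices hdet : Matrix.det (Matrix.of fun i j : Fin k =>
      ∑ m : Fin d, (S i.succ m - S 0 m) * (S j.succ m - S 0 m)) = 0 by
    rw [vol, hdet, Real.sqrt_zero, mul_zero]
  rcases Fin.eq_zero_or_eq_succ a with rfl | ⟨a, rfl⟩
  · exact Matrix.det_eq_zero_of_row_eq_zero b fun j => by simp [← h]
  · exact Matrix.det_zero_of_row_eq (i := a) (j := b) (fun hab' => hab (congrArg _ hab'))
      (by ext j; simp [h])

theorem vol_comp_succAbove_eq_zero {T : Fin (k + 2) → Pt d} {a b j : Fin (k + 2)} (hab : a ≠ b)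
    (h : T a = T b) (hja : j ≠ a) (hjb : j ≠ b) : vol (T ∘ j.succAbove) = 0 := by
  obtain ⟨a, rfl⟩ := Fin.exists_succAbove_eq hja.symm
  obtain ⟨b, rfl⟩ := Fin.exists_succAbove_eq hjb.symm
  exact vol_eq_zero_of_apply_eq (fun h' => hab (congrArg _ h')) h

theorem bdryChain_eq_add_add_sum (T : Fin (k + 2) → Pt d) {a b : Fin (k + 2)} (hab : a ≠ b) :
    bdryChain T = (-1 : ℝ) ^ (a : ℕ) • Finsupp.single (T ∘ a.succAbove) 1
      + (-1 : ℝ) ^ (b : ℕ) • Finsupp.single (T ∘ b.succAbove) 1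
      + ∑ j ∈ (univ.erase a).erase b, (-1 : ℝ) ^ (j : ℕ) • Finsupp.single (T ∘ j.succAbove) 1 := by
  rw [bdryChain, ← add_sum_erase _ _ (mem_univ a),
    ← add_sum_erase _ _ (mem_erase.2 ⟨hab.symm, mem_univ b⟩), add_assoc]

theorem linearCombination_bdryChain (ω : (Fin (k + 1) → Pt d) → ℝ) (T : Fin (k + 2) → Pt d) :
    Finsupp.linearCombination ℝ ω (bdryChain T) = cobdry ω T := by
  simp [bdryChain, cobdry, Finsupp.linearCombination_single]

def IsGeometric {m n : ℕ} (ρ : (Fin m → Pt d) → (Fin n → Pt d)) : Prop :=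
  Continuous ρ ∧ ∀ (φ : Pt d →ᵃ[ℝ] Pt d) (S : Fin m → Pt d),
    ρ (fun i => φ (S i)) = fun i => φ (ρ S i)

theorem isGeometric_comp_right {m n : ℕ} (f : Fin n → Fin m) :
    IsGeometric fun S : Fin m → Pt d => S ∘ f :=
  ⟨continuous_pi fun i => continuous_apply (f i), fun _ _ => rfl⟩

theorem IsGeometric.comp {l m n : ℕ} {ρ : (Fin m → Pt d) → (Fin n → Pt d)}
    {g : (Fin l → Pt d) → (Fin m → Pt d)} (hρ : IsGeometric ρ) (hg : IsGeometric g) :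
    IsGeometric (ρ ∘ g) :=
  ⟨hρ.1.comp hg.1, fun φ S => by simp only [Function.comp_apply, hg.2, hρ.2]⟩

variable (d k) in
def degenerateMaps : Set ((Fin (k + 1) → Pt d) → (Fin (k + 1) → Pt d) →₀ ℝ) :=
  {fun S => Finsupp.single (ν S) 1 |
    (ν : (Fin (k + 1) → Pt d) → (Fin (k + 1) → Pt d)) (_ : ∀ S, vol (ν S) = 0)}

variable (d k) in
def geometricBoundaryMaps : Set ((Fin (k + 1) → Pt d) → (Fin (k + 1) → Pt d) →₀ ℝ) :=
  {fun S => bdryChain (ρ S) | (ρ : (Fin (k + 1) → Pt d) → (Fin (k + 2) → Pt d)) (_ : IsGeometric ρ)}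

variable (d k) in
noncomputable def negligibleMaps : Submodule ℝ ((Fin (k + 1) → Pt d) → (Fin (k + 1) → Pt d) →₀ ℝ) :=
  Submodule.span ℝ (degenerateMaps d k) ⊔ Submodule.span ℝ (geometricBoundaryMaps d k)

theorem single_mem_negligibleMaps {ν : (Fin (k + 1) → Pt d) → (Fin (k + 1) → Pt d)}
    (hν : ∀ S, vol (ν S) = 0) : (fun S => Finsupp.single (ν S) (1 : ℝ)) ∈ negligibleMaps d k :=
  Submodule.mem_sup_left (Submodule.subset_span ⟨ν, hν, rfl⟩)

theorem bdryChain_mem_negligibleMaps {ρ : (Fin (k + 1) → Pt d) → (Fin (k + 2) → Pt d)}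
    (hρ : IsGeometric ρ) : (fun S => bdryChain (ρ S)) ∈ negligibleMaps d k :=
  Submodule.mem_sup_right (Submodule.subset_span ⟨ρ, hρ, rfl⟩)

theorem comp_mem_negligibleMaps {g : (Fin (k + 1) → Pt d) → (Fin (k + 1) → Pt d)}
    (hg : IsGeometric g) {c : (Fin (k + 1) → Pt d) → (Fin (k + 1) → Pt d) →₀ ℝ}
    (hc : c ∈ negligibleMaps d k) : c ∘ g ∈ negligibleMaps d k := by
  suffices negligibleMaps d k ≤ (negligibleMaps d k).comap (LinearMap.funLeft ℝ _ g) from this hc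
  refine sup_le (Submodule.span_le.2 ?_) (Submodule.span_le.2 ?_)
  · rintro _ ⟨ν, hν, rfl⟩
    exact single_mem_negligibleMaps fun S => hν (g S)
  · rintro _ ⟨ρ, hρ, rfl⟩
    exact bdryChain_mem_negligibleMaps (hρ.comp hg)

theorem exists_of_mem_negligibleMaps {c : (Fin (k + 1) → Pt d) → (Fin (k + 1) → Pt d) →₀ ℝ}
    (hc : c ∈ negligibleMaps d k) :
    ∃ (m₁ m₂ : ℕ) (a : Fin m₁ → ℝ)
        (ν : Fin m₁ → (Fin (k + 1) → Pt d) → (Fin (k + 1) → Pt d))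
        (b : Fin m₂ → ℝ)
        (ρ : Fin m₂ → (Fin (k + 1) → Pt d) → (Fin (k + 2) → Pt d)),
      (∀ j S, vol (ν j S) = 0) ∧
      (∀ j, Continuous (ρ j)) ∧
      (∀ j (φ : Pt d →ᵃ[ℝ] Pt d) (S : Fin (k + 1) → Pt d),
        ρ j (fun i => φ (S i)) = fun i => φ (ρ j S i)) ∧
      (∀ S : Fin (k + 1) → Pt d,
        c S = (∑ j, a j • Finsupp.single (ν j S) (1 : ℝ)) + ∑ j, b j • bdryChain (ρ j S)) := by
  obtain ⟨_, hy, _, hz, rfl⟩ := Submodule.mem_sup.1 hc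
  obtain ⟨m₁, a, gν, rfl⟩ := Submodule.mem_span_set'.1 hy
  obtain ⟨m₂, b, gρ, rfl⟩ := Submodule.mem_span_set'.1 hz
  choose ν hν hgν using fun j => (gν j).2
  choose ρ hρ hgρ using fun j => (gρ j).2
  refine ⟨m₁, m₂, a, ν, b, ρ, hν, fun j => (hρ j).1, fun j => (hρ j).2, fun S => ?_⟩
  simp only [Pi.add_apply, Finset.sum_apply, Pi.smul_apply, ← hgν, ← hgρ]

theorem linearCombination_apply_eq_zero_of_mem_negligibleMaps {ω : (Fin (k + 1) → Pt d) → ℝ}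
    (hclosed : ∀ T, cobdry ω T = 0) (hatom : ∀ S, vol S = 0 → ω S = 0)
    {c : (Fin (k + 1) → Pt d) → (Fin (k + 1) → Pt d) →₀ ℝ} (hc : c ∈ negligibleMaps d k)
    (S : Fin (k + 1) → Pt d) : Finsupp.linearCombination ℝ ω (c S) = 0 := by
  suffices negligibleMaps d k ≤
      LinearMap.ker (Finsupp.linearCombination ℝ ω ∘ₗ LinearMap.proj S) from this hc
  refine sup_le (Submodule.span_le.2 ?_) (Submodule.span_le.2 ?_)
  · rintro _ ⟨ν, hν, rfl⟩
    simp [hatom _ (hν S)]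
  · rintro _ ⟨ρ, -, rfl⟩
    simp [linearCombination_bdryChain, hclosed]

variable (d) in
noncomputable def permSubSign (σ : Equiv.Perm (Fin (k + 1))) :
    (Fin (k + 1) → Pt d) → (Fin (k + 1) → Pt d) →₀ ℝ :=
  fun S => Finsupp.single (S ∘ ⇑σ⁻¹) 1 - ((Equiv.Perm.sign σ : ℤ) : ℝ) • Finsupp.single S 1

theorem permSubSign_mul (τ π : Equiv.Perm (Fin (k + 1))) :
    permSubSign d (τ * π) =
      permSubSign d τ ∘ (· ∘ ⇑π⁻¹) + ((Equiv.Perm.sign τ : ℤ) : ℝ) • permSubSign d π := by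
  funext S
  simp only [permSubSign, mul_inv_rev, Equiv.Perm.coe_mul, map_mul, Int.cast_mul, Units.val_mul,
    Function.comp_apply, Pi.add_apply, Pi.smul_apply, smul_sub, smul_smul]
  rw [← Function.comp_assoc]
  abel

variable (d k) in
def decomposablePerms : Submonoid (Equiv.Perm (Fin (k + 1))) where
  carrier := {σ | permSubSign d σ ∈ negligibleMaps d k}
  one_mem' := by
    have : permSubSign d (1 : Equiv.Perm (Fin (k + 1))) = 0 := by
      funext S; simp [permSubSign]
    simp [this]
  mul_mem' {τ π} hτ hπ := by
    change permSubSign d (τ * π) ∈ negligibleMaps d k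
    rw [permSubSign_mul]
    exact add_mem (comp_mem_negligibleMaps (isGeometric_comp_right _) hτ)
      (Submodule.smul_mem _ _ hπ)

theorem mem_decomposablePerms {σ : Equiv.Perm (Fin (k + 1))} :
    σ ∈ decomposablePerms d k ↔ permSubSign d σ ∈ negligibleMaps d k :=
  Iff.rfl

/-- The vertex labels of `[p₀, …, p_{i+1}, p_i, p_{i+2}, …, p_k]`. -/
def duplicateAfterSucc (i : Fin k) (j : Fin (k + 2)) : Fin (k + 1) :=
  ⟨if (j : ℕ) ≤ i + 1 then j else if (j : ℕ) = i + 2 then i else j - 1, by split_ifs <;> omega⟩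

theorem duplicateAfterSucc_comp_succAbove_castSucc (i : Fin k) :
    duplicateAfterSucc i ∘ i.castSucc.castSucc.succAbove = Equiv.swap i.castSucc i.succ := by
  ext l
  simp only [Function.comp_apply, duplicateAfterSucc, Fin.succAbove, Fin.lt_def,
    Equiv.swap_apply_def, Fin.ext_iff]
  split_ifs <;> simp_all <;> omega

theorem duplicateAfterSucc_comp_succAbove_succ (i : Fin k) :
    duplicateAfterSucc i ∘ i.succ.succ.succAbove = id := by
  ext l
  simp only [Function.comp_apply, duplicateAfterSucc, Fin.succAbove, Fin.lt_def, id]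
  split_ifs <;> simp_all; omega

theorem duplicateAfterSucc_castSucc_castSucc (i : Fin k) :
    duplicateAfterSucc i i.castSucc.castSucc = duplicateAfterSucc i i.succ.succ := by
  ext; simp [duplicateAfterSucc]

theorem swap_mem_decomposablePerms (i : Fin k) :
    Equiv.swap i.castSucc i.succ ∈ decomposablePerms d k := by
  set f := duplicateAfterSucc i
  set a : Fin (k + 2) := i.castSucc.castSucc
  set b : Fin (k + 2) := i.succ.succ
  have hab : a ≠ b := by simp [a, b, Fin.ext_iff]; omega
  have hdegenerate : ∀ j ∈ (univ.erase a).erase b, ∀ S : Fin (k + 1) → Pt d,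
      vol ((S ∘ f) ∘ j.succAbove) = 0 := fun j hj S =>
    vol_comp_succAbove_eq_zero hab (congrArg S (duplicateAfterSucc_castSucc_castSucc i))
      (ne_of_mem_erase (mem_of_mem_erase hj)) (ne_of_mem_erase hj)
  -- `∂(S ∘ f) = (-1)ⁱ • (S ∘ swap + S) + (the degenerate faces)`
  have hdecomp : permSubSign d (Equiv.swap i.castSucc i.succ) = (-1 : ℝ) ^ (i : ℕ) •
      ((fun S : Fin (k + 1) → Pt d => bdryChain (S ∘ f)) -
        ∑ j ∈ (univ.erase a).erase b, (-1 : ℝ) ^ (j : ℕ) • fun S : Fin (k + 1) → Pt d =>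
          Finsupp.single ((S ∘ f) ∘ j.succAbove) (1 : ℝ)) := by
    funext S
    have hsq : ((-1 : ℝ) ^ (i : ℕ)) * (-1) ^ (i : ℕ) = 1 := by
      rw [← pow_add, ← two_mul, pow_mul, neg_one_sq, one_pow]
    simp only [permSubSign, Pi.smul_apply, Pi.sub_apply, Finset.sum_apply,
      bdryChain_eq_add_add_sum _ hab, add_sub_cancel_right, Function.comp_assoc, f, a, b,
      duplicateAfterSucc_comp_succAbove_castSucc, duplicateAfterSucc_comp_succAbove_succ,
      Function.comp_id, Equiv.swap_inv, Equiv.Perm.sign_swap (Fin.castSucc_lt_succ (i := i)).ne,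
      Fin.val_castSucc, Fin.val_succ, smul_add, smul_smul, pow_add, ← mul_assoc, hsq]
    norm_num
  rw [mem_decomposablePerms, hdecomp]
  exact Submodule.smul_mem _ _ (sub_mem (bdryChain_mem_negligibleMaps (isGeometric_comp_right f))
    (sum_mem fun j hj => Submodule.smul_mem _ _ (single_mem_negligibleMaps (hdegenerate j hj))))

theorem decomposablePerms_eq_top : decomposablePerms d k = ⊤ :=
  top_unique <| (Equiv.Perm.mclosure_swap_castSucc_succ k).ge.trans <|
    Submonoid.closure_le.2 <| Set.range_subset_iff.2 swap_mem_decomposablePerms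

end

/-- Permutation maps on simplices are decomposable: for any permutation `σ` of
`{0,…,k}` there are a linear combination `ν = Σⱼ aⱼ νⱼ` of simplex-valued maps,
each `νⱼ` taking values in simplices of zero `k`-volume, and a linear combination
`ρ = Σⱼ bⱼ ρⱼ` of geometric (continuous, commuting with affine push-forwards)
maps into `(k+1)`-simplices, such that `σ − sign(σ)·Id = ν + ∂ρ` as maps from
`k`-simplices to `k`-chains. Consequently every closed nonatomic `k`-germ `ω`
satisfies `⟨σS, ω⟩ = sign(σ)·⟨S, ω⟩`. -/
theorem perm_decomposable {d k : ℕ} (σ : Equiv.Perm (Fin (k + 1))) :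
    (∃ (m₁ m₂ : ℕ) (a : Fin m₁ → ℝ)
        (ν : Fin m₁ → (Fin (k + 1) → Pt d) → (Fin (k + 1) → Pt d))
        (b : Fin m₂ → ℝ)
        (ρ : Fin m₂ → (Fin (k + 1) → Pt d) → (Fin (k + 2) → Pt d)),
      (∀ j S, vol (ν j S) = 0) ∧
      (∀ j, Continuous (ρ j)) ∧
      (∀ j (φ : Pt d →ᵃ[ℝ] Pt d) (S : Fin (k + 1) → Pt d),
        ρ j (fun i => φ (S i)) = fun i => φ (ρ j S i)) ∧
      (∀ S : Fin (k + 1) → Pt d,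
        Finsupp.single (S ∘ ⇑σ⁻¹) (1 : ℝ)
            - ((Equiv.Perm.sign σ : ℤ) : ℝ) • Finsupp.single S (1 : ℝ)
          = (∑ j, a j • Finsupp.single (ν j S) (1 : ℝ))
            + ∑ j, b j • bdryChain (ρ j S)))
    ∧ (∀ ω : (Fin (k + 1) → Pt d) → ℝ,
        (∀ T : Fin (k + 2) → Pt d, cobdry ω T = 0) →
        (∀ S : Fin (k + 1) → Pt d, vol S = 0 → ω S = 0) →
        ∀ S : Fin (k + 1) → Pt d,
          ω (S ∘ ⇑σ⁻¹) = ((Equiv.Perm.sign σ : ℤ) : ℝ) * ω S) := by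
  have hσ : permSubSign d σ ∈ negligibleMaps d k :=
    mem_decomposablePerms.1 (decomposablePerms_eq_top ▸ Submonoid.mem_top σ)
  refine ⟨exists_of_mem_negligibleMaps hσ, fun ω hclosed hatom S => ?_⟩
  have hpair := linearCombination_apply_eq_zero_of_mem_negligibleMaps hclosed hatom hσ S
  simp only [permSubSign, map_sub, map_smul, Finsupp.linearCombination_single,
    smul_eq_mul] at hpair
  linarith
end

section
/- Dyadic decomposition identity: for a 2-simplex S = [p₀p₁p₂] with edge midpoints q₀=(p₁+p₂)/2, q₁=(p₀+p₂)/2, q₂=(p₀+p₁)/2, the dyadic decomposition dya(S) := [q₀q₁q₂] + [q₁q₀p₂] + [q₂p₁q₀] + [p₀q₂q₁] satisfies ⟨dya(S), ω⟩ = ⟨S, ω⟩ for every closed and nonatomic 2-germ ω. -/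
def IsClosedGermOn {d : ℕ} (D : Set (Pt d)) (ω : (Fin 3 → Pt d) → ℝ) : Prop :=
  ∀ T : Fin 4 → Pt d, (∀ i, T i ∈ D) → cobdry ω T = 0

def IsNonatomicGermOn {d : ℕ} (D : Set (Pt d)) (ω : (Fin 3 → Pt d) → ℝ) : Prop :=
  ∀ S : Fin 3 → Pt d, (∀ i, S i ∈ D) → Collinear ℝ (Set.range S) → ω S = 0

theorem collinear_insert_midpoint {k V P : Type*} [DivisionRing k] [CharZero k] [AddCommGroup V]
    [Module k V] [AddTorsor V P] (a b : P) : Collinear k {a, b, midpoint k a b} := by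
  rw [Set.pair_comm, Set.insert_comm]
  exact collinear_insert_of_mem_affineSpan_pair (AffineMap.lineMap_mem_affineSpan_pair _ _ _)

theorem cobdry_vecCons_four {d : ℕ} (ω : (Fin 3 → Pt d) → ℝ) (a b c e : Pt d) :
    cobdry ω ![a, b, c, e] = ω ![b, c, e] - ω ![a, c, e] + ω ![a, b, e] - ω ![a, b, c] := by
  have h₀ : ![a, b, c, e] ∘ (0 : Fin 4).succAbove = ![b, c, e] := by ext1 i; fin_cases i <;> rfl
  have h₁ : ![a, b, c, e] ∘ (1 : Fin 4).succAbove = ![a, c, e] := by ext1 i; fin_cases i <;> rfl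
  have h₂ : ![a, b, c, e] ∘ (2 : Fin 4).succAbove = ![a, b, e] := by ext1 i; fin_cases i <;> rfl
  have h₃ : ![a, b, c, e] ∘ (3 : Fin 4).succAbove = ![a, b, c] := by ext1 i; fin_cases i <;> rfl
  rw [cobdry, Fin.sum_univ_four, h₀, h₁, h₂, h₃]
  norm_num
  ring

variable {d : ℕ} {D : Set (Pt d)} {ω : (Fin 3 → Pt d) → ℝ} {a b c e : Pt d}

theorem IsClosedGermOn.faces_alternating_sum_eq_zero (hω : IsClosedGermOn D ω)
    (ha : a ∈ D) (hb : b ∈ D) (hc : c ∈ D) (he : e ∈ D) :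
    ω ![b, c, e] - ω ![a, c, e] + ω ![a, b, e] - ω ![a, b, c] = 0 := by
  rw [← cobdry_vecCons_four]
  exact hω _ fun i => by fin_cases i <;> assumption

theorem IsNonatomicGermOn.apply_eq_zero_of_collinear (hω : IsNonatomicGermOn D ω)
    (ha : a ∈ D) (hb : b ∈ D) (hc : c ∈ D) (hcol : Collinear ℝ {a, b, c}) : ω ![a, b, c] = 0 := by
  refine hω _ (fun i => by fin_cases i <;> assumption) ?_
  rwa [Matrix.range_cons, Matrix.range_cons_cons_empty, Set.singleton_union]

theorem IsNonatomicGermOn.apply_midpoint_eq_zero (hω : IsNonatomicGermOn D ω) (hD : Convex ℝ D)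
    (ha : a ∈ D) (hb : b ∈ D) : ω ![a, b, midpoint ℝ a b] = 0 :=
  hω.apply_eq_zero_of_collinear ha hb (hD.midpoint_mem ha hb) (collinear_insert_midpoint a b)

theorem IsClosedGermOn.apply_swap_zero_one (hcl : IsClosedGermOn D ω)
    (hna : IsNonatomicGermOn D ω) (ha : a ∈ D) (hb : b ∈ D) (hc : c ∈ D) :
    ω ![b, a, c] = -ω ![a, b, c] := by
  have hcoc := hcl.faces_alternating_sum_eq_zero ha hb ha hc
  have haac := hna.apply_eq_zero_of_collinear ha ha hc (by simpa using collinear_pair ℝ a c)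
  have haba := hna.apply_eq_zero_of_collinear ha hb ha
    (by simpa [Set.pair_comm a b] using collinear_pair ℝ a b)
  linarith

theorem IsClosedGermOn.apply_swap_one_two (hcl : IsClosedGermOn D ω)
    (hna : IsNonatomicGermOn D ω) (ha : a ∈ D) (hb : b ∈ D) (hc : c ∈ D) :
    ω ![a, c, b] = -ω ![a, b, c] := by
  have hcoc := hcl.faces_alternating_sum_eq_zero ha hb hc hb
  have hbcb := hna.apply_eq_zero_of_collinear hb hc hb
    (by simpa [Set.pair_comm b c] using collinear_pair ℝ b c)
  have habb := hna.apply_eq_zero_of_collinear ha hb hb (by simpa using collinear_pair ℝ a b)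
  linarith

/-- Dyadic decomposition identity: for a `2`-simplex `[p₀p₁p₂]` in a convex set
`D`, with edge midpoints `q₀ = (p₁+p₂)/2`, `q₁ = (p₀+p₂)/2`, `q₂ = (p₀+p₁)/2`,
every closed and nonatomic `2`-germ `ω` on `D` satisfies
`⟨[q₀q₁q₂] + [q₁q₀p₂] + [q₂p₁q₀] + [p₀q₂q₁], ω⟩ = ⟨[p₀p₁p₂], ω⟩`. -/
theorem dyadic_decomposition {d : ℕ} (D : Set (Pt d)) (hD : Convex ℝ D)
    (ω : (Fin 3 → Pt d) → ℝ)
    (hclosed : ∀ T : Fin 4 → Pt d, (∀ i, T i ∈ D) → cobdry ω T = 0)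
    (hna : ∀ S : Fin 3 → Pt d, (∀ i, S i ∈ D) → Collinear ℝ (Set.range S) → ω S = 0)
    (p₀ p₁ p₂ : Pt d) (hp₀ : p₀ ∈ D) (hp₁ : p₁ ∈ D) (hp₂ : p₂ ∈ D)
    (q₀ q₁ q₂ : Pt d)
    (hq₀ : q₀ = (2⁻¹ : ℝ) • (p₁ + p₂)) (hq₁ : q₁ = (2⁻¹ : ℝ) • (p₀ + p₂))
    (hq₂ : q₂ = (2⁻¹ : ℝ) • (p₀ + p₁)) :
    ω ![q₀, q₁, q₂] + ω ![q₁, q₀, p₂] + ω ![q₂, p₁, q₀] + ω ![p₀, q₂, q₁]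
      = ω ![p₀, p₁, p₂] := by
  have hcl : IsClosedGermOn D ω := hclosed
  have hna : IsNonatomicGermOn D ω := hna
  have hm₀ : q₀ = midpoint ℝ p₁ p₂ := by rw [hq₀, midpoint_eq_smul_add]; norm_num
  have hm₁ : q₁ = midpoint ℝ p₀ p₂ := by rw [hq₁, midpoint_eq_smul_add]; norm_num
  have hm₂ : q₂ = midpoint ℝ p₀ p₁ := by rw [hq₂, midpoint_eq_smul_add]; norm_num
  have hq₀D : q₀ ∈ D := hm₀ ▸ hD.midpoint_mem hp₁ hp₂
  have hq₁D : q₁ ∈ D := hm₁ ▸ hD.midpoint_mem hp₀ hp₂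
  have hq₂D : q₂ ∈ D := hm₂ ▸ hD.midpoint_mem hp₀ hp₁
  have edge₀ : ω ![p₁, p₂, q₀] = 0 := hm₀ ▸ hna.apply_midpoint_eq_zero hD hp₁ hp₂
  have edge₁ : ω ![p₀, p₂, q₁] = 0 := hm₁ ▸ hna.apply_midpoint_eq_zero hD hp₀ hp₂
  have edge₂ : ω ![p₀, p₁, q₂] = 0 := hm₂ ▸ hna.apply_midpoint_eq_zero hD hp₀ hp₁
  have cone₁ := hcl.faces_alternating_sum_eq_zero hp₀ hp₁ hp₂ hq₀D
  have cone₂ := hcl.faces_alternating_sum_eq_zero hp₀ hp₁ hq₀D hq₂D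
  have cone₃ := hcl.faces_alternating_sum_eq_zero hp₀ hp₂ hq₀D hq₁D
  have cone₄ := hcl.faces_alternating_sum_eq_zero hp₀ hq₀D hq₁D hq₂D
  have rot₁ : ω ![q₁, q₀, p₂] = -ω ![p₂, q₀, q₁] := by
    linarith [hcl.apply_swap_zero_one hna hq₀D hq₁D hp₂, hcl.apply_swap_one_two hna hq₀D hp₂ hq₁D,
      hcl.apply_swap_zero_one hna hp₂ hq₀D hq₁D]
  have rot₂ : ω ![q₂, p₁, q₀] = ω ![p₁, q₀, q₂] := by
    linarith [hcl.apply_swap_zero_one hna hq₂D hp₁ hq₀D, hcl.apply_swap_one_two hna hp₁ hq₀D hq₂D]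
  have rot₃ : ω ![p₀, q₂, q₁] = -ω ![p₀, q₁, q₂] := hcl.apply_swap_one_two hna hp₀ hq₁D hq₂D
  linear_combination cone₁ + cone₂ - cone₃ + cone₄ - edge₀ + edge₁ - edge₂ + rot₁ + rot₂ + rot₃
end

section
/- Geometric uniqueness lemma: let τ₁,…,τ_ℓ be maps on k-simplices such that τᵢS is isometric to the simplex S scaled by 1/2 for all S, let λᵢ ∈ [−1,1], and set τ := Σᵢ λᵢτᵢ. Let v be a uniform k-gauge (equal on isometric simplices) and ω a k-germ with |ω_S| ≤ C·v(S) for all S. Then for every n ≥ 0, |⟨S, (τ')ⁿω⟩| ≤ C·ℓⁿ·v((2⁻ⁿ)S). If moreover v is (log₂ℓ)-Dini and τ'ω = ω, then ω = 0. -/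
section

variable {𝕜 E ι κ : Type*} [NormedField 𝕜] [NormedAddCommGroup E] [NormedSpace 𝕜 E]

def IsIsometricImage (S S' : ι → E) : Prop :=
  ∃ f : E → E, Isometry f ∧ ∀ j, f (S j) = S' j

theorem IsIsometricImage.smul {S S' : ι → E} (h : IsIsometricImage S S') {c : 𝕜} (hc : c ≠ 0) :
    IsIsometricImage (c • S) (c • S') := by
  obtain ⟨f, hf, hfS⟩ := h
  refine ⟨fun x => c • f (c⁻¹ • x), Isometry.of_dist_eq fun x y => ?_, fun j => ?_⟩
  · rw [dist_smul₀, hf.dist_eq, dist_smul₀, ← mul_assoc, ← norm_mul, mul_inv_cancel₀ hc,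
      norm_one, one_mul]
  · simp [inv_smul_smul₀ hc, hfS]

/-- The action `ω ↦ τ'ω` of the chain map `τ = Σᵢ λᵢ τᵢ` on germs. -/
def germPullback [Fintype κ] (lam : κ → ℝ) (τ : κ → (ι → E) → (ι → E))
    (ω : (ι → E) → ℝ) (S : ι → E) : ℝ :=
  ∑ i, lam i * ω (τ i S)

variable {lam : κ → ℝ} {τ : κ → (ι → E) → (ι → E)} {v : (ι → E) → ℝ} {r : 𝕜}

theorem gauge_smul_of_isIsometricImage
    (hvunif : ∀ S S' : ι → E, IsIsometricImage S S' → v S = v S')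
    (hτ : ∀ i S, IsIsometricImage (r • S) (τ i S)) (hr : r ≠ 0) (n : ℕ) (i : κ) (S : ι → E) :
    v (r ^ n • τ i S) = v (r ^ (n + 1) • S) := by
  have h := (hτ i S).smul (pow_ne_zero n hr)
  rw [smul_smul, ← pow_succ] at h
  exact (hvunif _ _ h).symm

theorem abs_germPullback_iterate_le [Fintype κ]
    (hlam : ∀ i, |lam i| ≤ 1) (hτ : ∀ i S, IsIsometricImage (r • S) (τ i S)) (hr : r ≠ 0)
    (hvunif : ∀ S S' : ι → E, IsIsometricImage S S' → v S = v S')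
    {ω : (ι → E) → ℝ} {C : ℝ} (hbound : ∀ S, |ω S| ≤ C * v S) (n : ℕ) (S : ι → E) :
    |(germPullback lam τ)^[n] ω S| ≤ C * (Fintype.card κ : ℝ) ^ n * v (r ^ n • S) := by
  induction n generalizing S with
  | zero => simpa using hbound S
  | succ n ih =>
    set ωₙ := (germPullback lam τ)^[n] ω
    have hterm (i : κ) :
        |lam i * ωₙ (τ i S)| ≤ C * (Fintype.card κ : ℝ) ^ n * v (r ^ (n + 1) • S) := by
      rw [abs_mul, ← gauge_smul_of_isIsometricImage hvunif hτ hr n i S]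
      exact (mul_le_of_le_one_left (abs_nonneg _) (hlam i)).trans (ih (τ i S))
    calc |(germPullback lam τ)^[n + 1] ω S| = |∑ i, lam i * ωₙ (τ i S)| := by
          rw [Function.iterate_succ_apply']; rfl
      _ ≤ ∑ i, |lam i * ωₙ (τ i S)| := Finset.abs_sum_le_sum_abs _ _
      _ ≤ ∑ _i : κ, C * (Fintype.card κ : ℝ) ^ n * v (r ^ (n + 1) • S) :=
          Finset.sum_le_sum fun i _ => hterm i
      _ = C * (Fintype.card κ : ℝ) ^ (n + 1) * v (r ^ (n + 1) • S) := by
          rw [Finset.sum_const, Finset.card_univ, nsmul_eq_mul, pow_succ]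
          ring

end

theorem eq_zero_of_abs_le_mul_of_tendsto_zero {x C : ℝ} {a : ℕ → ℝ}
    (hx : ∀ n, |x| ≤ C * a n) (ha : Filter.Tendsto a Filter.atTop (nhds 0)) : x = 0 := by
  have hCa : Filter.Tendsto (fun n => C * a n) Filter.atTop (nhds 0) := by
    simpa using ha.const_mul C
  exact abs_nonpos_iff.mp (ge_of_tendsto' hCa hx)

theorem geometric_uniqueness_general {d k : ℕ} (ℓ : ℕ)
    (lam : Fin ℓ → ℝ) (hlam : ∀ i, lam i ∈ Set.Icc (-1 : ℝ) 1)
    (τ : Fin ℓ → (Fin (k + 1) → Pt d) → (Fin (k + 1) → Pt d))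
    (hτ : ∀ i (S : Fin (k + 1) → Pt d),
      ∃ ι : Pt d → Pt d, Isometry ι ∧ ∀ j, ι ((2⁻¹ : ℝ) • S j) = τ i S j)
    (v : (Fin (k + 1) → Pt d) → ℝ)
    (hvunif : ∀ S S' : Fin (k + 1) → Pt d,
      (∃ ι : Pt d → Pt d, Isometry ι ∧ ∀ j, ι (S j) = S' j) → v S = v S')
    (ω : (Fin (k + 1) → Pt d) → ℝ) (C : ℝ)
    (hbound : ∀ S, |ω S| ≤ C * v S) :
    (∀ (n : ℕ) (S : Fin (k + 1) → Pt d),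
      |(fun ω' : (Fin (k + 1) → Pt d) → ℝ =>
          fun S' => ∑ i, lam i * ω' (τ i S'))^[n] ω S|
        ≤ C * (ℓ : ℝ) ^ n * v (fun j => ((2 : ℝ)⁻¹) ^ n • S j))
    ∧ ((∀ S : Fin (k + 1) → Pt d,
          Filter.Tendsto (fun n : ℕ => (ℓ : ℝ) ^ n * v (fun j => ((2 : ℝ)⁻¹) ^ n • S j))
            Filter.atTop (nhds 0)) →
        (∀ S : Fin (k + 1) → Pt d, ∑ i, lam i * ω (τ i S) = ω S) →
        ∀ S, ω S = 0) := by
  have hbound_iter : ∀ (n : ℕ) (S : Fin (k + 1) → Pt d),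
      |(germPullback lam τ)^[n] ω S| ≤ C * (ℓ : ℝ) ^ n * v ((2 : ℝ)⁻¹ ^ n • S) := by
    simpa using abs_germPullback_iterate_le (r := (2⁻¹ : ℝ)) (fun i => abs_le.mpr (hlam i)) hτ
      (by norm_num) hvunif hbound
  refine ⟨hbound_iter, fun hdini hfix S => ?_⟩
  have hω : germPullback lam τ ω = ω := funext hfix
  refine eq_zero_of_abs_le_mul_of_tendsto_zero (C := C) (fun n => ?_) (hdini S)
  have h := hbound_iter n S
  rwa [Function.iterate_fixed hω, mul_assoc] at h

/-- Geometric uniqueness lemma: let `τ₁,…,τ_ℓ` be maps on `k`-simplices such that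
`τᵢS` is isometric to `S` scaled by `1/2`, `λᵢ ∈ [−1,1]`, `τ := Σᵢ λᵢτᵢ` (acting on
germs by `(τ'ω)(S) = Σᵢ λᵢ ω(τᵢS)`), `v` a uniform nonnegative `k`-gauge and `ω` a
`k`-germ with `|ω_S| ≤ C·v(S)`. Then `|⟨S, (τ')ⁿω⟩| ≤ C·ℓⁿ·v((2⁻ⁿ)S)` for every
`n` and `S`; and if moreover `v` is `(log₂ℓ)`-Dini (i.e. `ℓⁿ·v((2⁻ⁿ)S) → 0`) and
`τ'ω = ω`, then `ω = 0`. -/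
theorem geometric_uniqueness {d k : ℕ} (ℓ : ℕ) (hℓ : 1 ≤ ℓ)
    (lam : Fin ℓ → ℝ) (hlam : ∀ i, lam i ∈ Set.Icc (-1 : ℝ) 1)
    (τ : Fin ℓ → (Fin (k + 1) → Pt d) → (Fin (k + 1) → Pt d))
    (hτ : ∀ i (S : Fin (k + 1) → Pt d),
      ∃ ι : Pt d → Pt d, Isometry ι ∧ ∀ j, ι ((2⁻¹ : ℝ) • S j) = τ i S j)
    (v : (Fin (k + 1) → Pt d) → ℝ)
    (hv0 : ∀ S, 0 ≤ v S)
    (hvunif : ∀ S S' : Fin (k + 1) → Pt d,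
      (∃ ι : Pt d → Pt d, Isometry ι ∧ ∀ j, ι (S j) = S' j) → v S = v S')
    (ω : (Fin (k + 1) → Pt d) → ℝ) (C : ℝ)
    (hbound : ∀ S, |ω S| ≤ C * v S) :
    (∀ (n : ℕ) (S : Fin (k + 1) → Pt d),
      |(fun ω' : (Fin (k + 1) → Pt d) → ℝ =>
          fun S' => ∑ i, lam i * ω' (τ i S'))^[n] ω S|
        ≤ C * (ℓ : ℝ) ^ n * v (fun j => ((2 : ℝ)⁻¹) ^ n • S j))
    ∧ ((∀ S : Fin (k + 1) → Pt d,
          Filter.Tendsto (fun n : ℕ => (ℓ : ℝ) ^ n * v (fun j => ((2 : ℝ)⁻¹) ^ n • S j))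
            Filter.atTop (nhds 0)) →
        (∀ S : Fin (k + 1) → Pt d, ∑ i, lam i * ω (τ i S) = ω S) →
        ∀ S, ω S = 0) :=
  geometric_uniqueness_general ℓ lam hlam τ hτ v hvunif ω C hbound
end

section
/- Existence of the Young integral as a sewing: let γ > 1, D ⊆ ℝ^d, and f, g : D → ℝ continuous, and assume |⟨[p₀p₁p₂], δ(f ∪ δg)⟩| = |(f_{p₁}−f_{p₀})(g_{p₂}−g_{p₁})| ≤ C·diam([p₀p₁p₂])^γ for all triples. Then for every segment [pq] ⊆ D, the limit over iterated midpoint subdivisions of the Riemann sums Σᵢ f_{xᵢ}(g_{xᵢ₊₁}−g_{xᵢ}) along [pq] exists; the resulting 1-germ f dg is regular (additive along lines and vanishing on degenerate segments) and satisfies |f_p(g_q−g_p) − (f dg)_{pq}| ≤ c(γ)·C·|q−p|^γ. -/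
open Filter Finset Set

namespace YoungAux
open scoped Classical

noncomputable section

/-- uniform grid point -/
def xp (N i : ℕ) (a b : ℝ) : ℝ := a + (i : ℝ) / (N : ℝ) * (b - a)

/-- uniform Riemann sum with `N` intervals over `[a,b]` -/
def U (F G : ℝ → ℝ) (N : ℕ) (a b : ℝ) : ℝ :=
  ∑ i ∈ Finset.range N, F (xp N i a b) * (G (xp N (i+1) a b) - G (xp N i a b))

/-- partition Riemann sum -/
def PS (F G : ℝ → ℝ) (z : ℕ → ℝ) (k : ℕ) : ℝ :=
  ∑ i ∈ Finset.range k, F (z i) * (G (z (i+1)) - G (z i))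

variable {F G : ℝ → ℝ} {C' γ : ℝ}

lemma chain_le {z : ℕ → ℝ} {k : ℕ} (hz : ∀ i, i < k → z i ≤ z (i+1)) :
    ∀ i j, i ≤ j → j ≤ k → z i ≤ z j := by
  intro i j hij hjk
  induction j with
  | zero => simp_all
  | succ m ih =>
    rcases Nat.lt_or_ge i (m+1) with h | h
    · exact le_trans (ih (Nat.lt_succ_iff.mp h) (le_trans (Nat.le_succ m) hjk))
        (hz m (Nat.lt_of_lt_of_le (Nat.lt_succ_self m) hjk))
    · have : i = m + 1 := le_antisymm hij h
      simp [this]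

section core

variable (hγ : 1 < γ) (hC : 0 ≤ C')
  (hδ : ∀ s t u : ℝ, 0 ≤ s → u ≤ 1 → s ≤ t → t ≤ u →
    |(F t - F s) * (G u - G t)| ≤ C' * (u - s) ^ γ)

include hγ hC hδ in
lemma merge : ∀ (k : ℕ) (z : ℕ → ℝ), (∀ i, i < k → z i ≤ z (i+1)) → 0 ≤ z 0 → z k ≤ 1 →
    |PS F G z k - F (z 0) * (G (z k) - G (z 0))| ≤ k * C' * (z k - z 0) ^ γ := by
  intro k
  induction k with
  | zero => intro z _ _ _; simp [PS]
  | succ m ih =>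
    intro z hz h0 h1
    rcases Nat.eq_zero_or_pos m with hm | hm
    · subst hm
      have he : PS F G z 1 = F (z 0) * (G (z 1) - G (z 0)) := by simp [PS]
      rw [he, sub_self, abs_zero]
      have h01 : (0:ℝ) ≤ z 1 - z 0 := sub_nonneg.mpr (hz 0 (by norm_num))
      have := Real.rpow_nonneg h01 γ
      positivity
    · -- m ≥ 1, write m = m'+1 conceptually; define z' removing the point z m
      set z' : ℕ → ℝ := fun i => if i = m then z (m+1) else z i with hz'def
      have hz'0 : z' 0 = z 0 := if_neg (by omega)
      have hz'm : z' m = z (m+1) := if_pos rfl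
      have hz'eq : ∀ i, i < m → z' i = z i := fun i hi => if_neg (by omega)
      -- chain for z'
      have hchain' : ∀ i, i < m → z' i ≤ z' (i+1) := by
        intro i hi
        rcases Nat.lt_or_ge (i+1) m with h | h
        · rw [hz'eq i (by omega), hz'eq (i+1) h]; exact hz i (by omega)
        · have : i + 1 = m := by omega
          rw [hz'eq i (by omega), this, hz'm]
          exact le_trans (hz i (by omega)) (by simpa [this] using hz (i+1) (by omega))
      -- sums
      obtain ⟨m', rfl⟩ : ∃ m', m = m' + 1 := ⟨m - 1, by omega⟩
      have hPSz : PS F G z (m' + 2) = PS F G z m' + F (z (m'+1)) * (G (z (m'+2)) - G (z (m'+1)))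
          + F (z m') * (G (z (m'+1)) - G (z m')) := by
        simp [PS, Finset.sum_range_succ]; ring
      have hPSz' : PS F G z' (m' + 2 - 1) = PS F G z m' + F (z m') * (G (z (m'+2)) - G (z m')) := by
        have h1 : PS F G z' (m'+1) = PS F G z' m' + F (z' m') * (G (z' (m'+1)) - G (z' m')) := by
          simp [PS, Finset.sum_range_succ]
        have h2 : PS F G z' m' = PS F G z m' := by
          apply Finset.sum_congr rfl
          intro i hi
          rw [hz'eq i (by have := Finset.mem_range.mp hi; omega),
            hz'eq (i+1) (by have := Finset.mem_range.mp hi; omega)]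
        rw [show m' + 2 - 1 = m' + 1 from rfl, h1, h2, hz'eq m' (by omega),
          show z' (m'+1) = z (m'+2) from if_pos rfl]
      -- the error term
      have hkey : PS F G z (m'+2) - PS F G z' (m'+1)
          = (F (z (m'+1)) - F (z m')) * (G (z (m'+2)) - G (z (m'+1))) := by
        rw [hPSz, show (m':ℕ) + 2 - 1 = m' + 1 from rfl] at *
        rw [hPSz']; ring
      have hmono := chain_le hz
      have hzm'0 : 0 ≤ z m' := le_trans h0 (hmono 0 m' (by omega) (by omega))
      have herr : |(F (z (m'+1)) - F (z m')) * (G (z (m'+2)) - G (z (m'+1)))|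
          ≤ C' * (z (m'+2) - z 0) ^ γ := by
        refine le_trans (hδ (z m') (z (m'+1)) (z (m'+2)) hzm'0 h1
          (hz m' (by omega)) (hz (m'+1) (by omega))) ?_
        apply mul_le_mul_of_nonneg_left _ hC
        apply Real.rpow_le_rpow (by linarith [hmono m' (m'+2) (by omega) (by omega)])
          (by linarith [hmono 0 m' (by omega) (by omega)]) (by linarith)
      have hIH := ih z' hchain' (by rw [hz'0]; exact h0) (by rw [hz'm]; exact h1)
      rw [hz'0, hz'm] at hIH
      calc |PS F G z (m'+2) - F (z 0) * (G (z (m'+2)) - G (z 0))|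
          ≤ |PS F G z (m'+2) - PS F G z' (m'+1)|
            + |PS F G z' (m'+1) - F (z 0) * (G (z (m'+2)) - G (z 0))| := by
            rw [show z (m'+1+1) = z (m'+2) from rfl] at *
            exact abs_sub_le _ _ _
        _ ≤ C' * (z (m'+2) - z 0) ^ γ + (m'+1) * C' * (z (m'+2) - z 0) ^ γ := by
            rw [hkey]
            simp only [show m'+1+1 = m'+2 from rfl] at hIH
            push_cast at hIH
            exact add_le_add herr (by linarith)
        _ = ((m'+2:ℕ):ℝ) * C' * (z (m'+2) - z 0) ^ γ := by push_cast; ring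
  

lemma sum_range_mul_eq {β : Type*} [AddCommMonoid β] (h : ℕ → β) (N M : ℕ) :
    ∑ j ∈ Finset.range (N*M), h j = ∑ i ∈ Finset.range N, ∑ l ∈ Finset.range M, h (i*M + l) := by
  induction N with
  | zero => simp
  | succ n ih =>
    rw [Nat.succ_mul, Finset.sum_range_add, ih, Finset.sum_range_succ]

lemma xp_comp {N M i l : ℕ} (hN : N ≠ 0) (hM : M ≠ 0) (a b : ℝ) :
    xp (N*M) (i*M + l) a b = xp M l (xp N i a b) (xp N (i+1) a b) := by
  have hN' : (N:ℝ) ≠ 0 := Nat.cast_ne_zero.mpr hN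
  have hM' : (M:ℝ) ≠ 0 := Nat.cast_ne_zero.mpr hM
  simp only [xp]
  push_cast
  field_simp
  ring

lemma U_split {N M : ℕ} (hN : N ≠ 0) (hM : M ≠ 0) (a b : ℝ) :
    U F G (N*M) a b = ∑ i ∈ Finset.range N, U F G M (xp N i a b) (xp N (i+1) a b) := by
  rw [U, sum_range_mul_eq]
  apply Finset.sum_congr rfl
  intro i _
  rw [U]
  apply Finset.sum_congr rfl
  intro l _
  rw [xp_comp hN hM, show i*M + l + 1 = i*M + (l+1) from rfl, xp_comp hN hM]

lemma xp_zero {N : ℕ} (a b : ℝ) : xp N 0 a b = a := by simp [xp]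

lemma xp_last {N : ℕ} (hN : N ≠ 0) (a b : ℝ) : xp N N a b = b := by
  have : (N:ℝ) ≠ 0 := Nat.cast_ne_zero.mpr hN
  unfold xp; rw [div_self this]; ring

lemma xp_mono {N : ℕ} {i j : ℕ} (hij : i ≤ j) {a b : ℝ} (hab : a ≤ b) :
    xp N i a b ≤ xp N j a b := by
  unfold xp
  have h1 : (0:ℝ) ≤ b - a := by linarith
  have h2 : (i:ℝ)/(N:ℝ) ≤ (j:ℝ)/(N:ℝ) := by
    gcongr
  nlinarith

lemma xp_mem {N i : ℕ} (hi : i ≤ N) (hN : N ≠ 0) {a b : ℝ} (hab : a ≤ b) :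
    a ≤ xp N i a b ∧ xp N i a b ≤ b := by
  constructor
  · have := xp_mono (Nat.zero_le i) hab (N := N); rwa [xp_zero] at this
  · have := xp_mono hi hab (N := N); rwa [xp_last hN] at this

lemma xp_len {N i : ℕ} (hN : N ≠ 0) (a b : ℝ) :
    xp N (i+1) a b - xp N i a b = (b - a) / N := by
  have : (N:ℝ) ≠ 0 := Nat.cast_ne_zero.mpr hN
  simp only [xp]; push_cast
  ring

lemma U_one (a b : ℝ) : U F G 1 a b = F a * (G b - G a) := by
  simp [U, xp]

include hγ hC hδ in
lemma Usingle {M : ℕ} (hM : M ≠ 0) {x y : ℝ} (hxy : x ≤ y) (hx : 0 ≤ x) (hy : y ≤ 1) :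
    |U F G M x y - F x * (G y - G x)| ≤ M * C' * (y - x) ^ γ := by
  have h := merge hγ hC hδ M (fun i => xp M i x y)
    (fun i _ => xp_mono (Nat.le_succ i) hxy) (by simpa [xp_zero] using hx)
    (by simpa [xp_last hM] using hy)
  simp only [xp_zero, xp_last hM] at h
  exact h

include hγ hC hδ in
lemma Umul {N M : ℕ} (hN : N ≠ 0) (hM : M ≠ 0) {a b : ℝ} (hab : a ≤ b) (ha : 0 ≤ a)
    (hb : b ≤ 1) :
    |U F G (N*M) a b - U F G N a b| ≤ N * (M * C' * ((b - a)/N) ^ γ) := by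
  rw [U_split hN hM]
  have hUN : U F G N a b
      = ∑ i ∈ Finset.range N, F (xp N i a b) * (G (xp N (i+1) a b) - G (xp N i a b)) := rfl
  rw [hUN, ← Finset.sum_sub_distrib]
  refine le_trans (Finset.abs_sum_le_sum_abs _ _) ?_
  have hbd : ∀ i ∈ Finset.range N,
      |U F G M (xp N i a b) (xp N (i+1) a b)
        - F (xp N i a b) * (G (xp N (i+1) a b) - G (xp N i a b))|
      ≤ M * C' * ((b - a)/N) ^ γ := by
    intro i hi
    have hi' := Finset.mem_range.mp hi
    have h1 := xp_mem (Nat.le_of_lt hi') hN hab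
    have h2 := xp_mem hi' hN hab
    have := Usingle hγ hC hδ hM (xp_mono (Nat.le_succ i) hab (N := N))
      (le_trans ha h1.1) (le_trans h2.2 hb)
    rwa [xp_len hN] at this
  refine le_trans (Finset.sum_le_sum hbd) ?_
  rw [Finset.sum_const, Finset.card_range, nsmul_eq_mul]

omit hC hδ in
include hγ in
lemma arith {c d B : ℝ} (hd : 0 ≤ d) (hc : 0 < c) :
    c * (B * (d/c) ^ γ) = B * d ^ γ * c ^ (1 - γ) := by
  rw [Real.div_rpow hd hc.le, Real.rpow_sub hc, Real.rpow_one]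
  have : c ^ γ ≠ 0 := ne_of_gt (Real.rpow_pos_of_pos hc γ)
  field_simp

omit hC hδ in
include hγ in
lemma rconv (n : ℕ) : ((2:ℝ)^n) ^ (1-γ) = ((2:ℝ) ^ (1-γ)) ^ n := by
  rw [← Real.rpow_natCast ((2:ℝ) ^ (1-γ)) n, ← Real.rpow_natCast (2:ℝ) n,
    ← Real.rpow_mul (by norm_num), ← Real.rpow_mul (by norm_num), mul_comm]

include hγ hC hδ in
lemma step_bound {a b : ℝ} (hab : a ≤ b) (ha : 0 ≤ a) (hb : b ≤ 1) (n : ℕ) :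
    dist (U F G (2^n) a b) (U F G (2^(n+1)) a b)
      ≤ (2 * C' * (b-a) ^ γ) * ((2:ℝ) ^ (1-γ)) ^ n := by
  have h := Umul hγ hC hδ (N := 2^n) (M := 2) (by positivity) (by norm_num) hab ha hb
  rw [Real.dist_eq, abs_sub_comm, show 2^(n+1) = 2^n * 2 from pow_succ 2 n]
  refine le_trans h (le_of_eq ?_)
  have harith := arith (B := 2 * C') (γ := γ) hγ (by linarith : (0:ℝ) ≤ b - a)
    (by positivity : (0:ℝ) < ((2^n : ℕ):ℝ))
  push_cast at harith ⊢
  rw [harith, rconv hγ]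

end core

/-- The sewing limit. -/
def Ilim (F G : ℝ → ℝ) (a b : ℝ) : ℝ :=
  if h : ∃ L, Tendsto (fun n => U F G (2^n) a b) atTop (nhds L) then h.choose else 0

section core2

variable (hγ : 1 < γ) (hC : 0 ≤ C')
  (hδ : ∀ s t u : ℝ, 0 ≤ s → u ≤ 1 → s ≤ t → t ≤ u →
    |(F t - F s) * (G u - G t)| ≤ C' * (u - s) ^ γ)

omit hC hδ in
include hγ in
lemma hr0 : (0:ℝ) < (2:ℝ) ^ (1-γ) := Real.rpow_pos_of_pos (by norm_num) _

omit hC hδ in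
include hγ in
lemma hr1 : (2:ℝ) ^ (1-γ) < 1 :=
  Real.rpow_lt_one_of_one_lt_of_neg (by norm_num) (by linarith)

include hγ hC hδ in
lemma Ilim_tendsto {a b : ℝ} (hab : a ≤ b) (ha : 0 ≤ a) (hb : b ≤ 1) :
    Tendsto (fun n => U F G (2^n) a b) atTop (nhds (Ilim F G a b)) := by
  have hcs : CauchySeq (fun n => U F G (2^n) a b) :=
    cauchySeq_of_le_geometric _ _ (hr1 hγ) (step_bound hγ hC hδ hab ha hb)
  obtain ⟨L, hL⟩ := cauchySeq_tendsto_of_complete hcs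
  have hex : ∃ L, Tendsto (fun n => U F G (2^n) a b) atTop (nhds L) := ⟨L, hL⟩
  rw [Ilim, dif_pos hex]
  exact hex.choose_spec

include hγ hC hδ in
lemma Ilim_dyadic_dist {a b : ℝ} (hab : a ≤ b) (ha : 0 ≤ a) (hb : b ≤ 1) (n : ℕ) :
    dist (U F G (2^n) a b) (Ilim F G a b)
      ≤ (2 * C' * (b-a) ^ γ) * ((2:ℝ) ^ (1-γ)) ^ n / (1 - (2:ℝ) ^ (1-γ)) :=
  dist_le_of_le_geometric_of_tendsto _ _ (hr1 hγ) (step_bound hγ hC hδ hab ha hb)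
    (Ilim_tendsto hγ hC hδ hab ha hb) n

include hγ hC hδ in
lemma Ilim_bound {a b : ℝ} (hab : a ≤ b) (ha : 0 ≤ a) (hb : b ≤ 1) :
    |F a * (G b - G a) - Ilim F G a b|
      ≤ (2 / (1 - (2:ℝ) ^ (1-γ))) * C' * (b-a) ^ γ := by
  have h := Ilim_dyadic_dist hγ hC hδ hab ha hb 0
  rw [pow_zero ((2:ℝ)^(1-γ)), mul_one] at h
  rw [← U_one (F := F) (G := G) a b, ← Real.dist_eq]
  calc dist (U F G 1 a b) (Ilim F G a b) = dist (U F G (2^0) a b) (Ilim F G a b) := by norm_num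
    _ ≤ (2 * C' * (b-a) ^ γ) / (1 - (2:ℝ) ^ (1-γ)) := h
    _ = (2 / (1 - (2:ℝ) ^ (1-γ))) * C' * (b-a) ^ γ := by ring

include hγ hC hδ in
lemma S_bound {x y : ℝ} (hxy : x ≤ y) (hx : 0 ≤ x) (hy : y ≤ 1) (k : ℕ) :
    |U F G (2^k) x y - F x * (G y - G x)| ≤ (4 / (1 - (2:ℝ) ^ (1-γ))) * C' * (y-x) ^ γ := by
  have h1 := Ilim_dyadic_dist hγ hC hδ hxy hx hy k
  have h2 := Ilim_bound hγ hC hδ hxy hx hy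
  have hrk : ((2:ℝ) ^ (1-γ)) ^ k ≤ 1 :=
    pow_le_one₀ (le_of_lt (hr0 hγ)) (le_of_lt (hr1 hγ))
  have hden : (0:ℝ) < 1 - (2:ℝ) ^ (1-γ) := by linarith [hr1 (γ := γ) hγ]
  have hnum : (0:ℝ) ≤ 2 * C' * (y-x) ^ γ := by
    have := Real.rpow_nonneg (by linarith : (0:ℝ) ≤ y - x) γ
    positivity
  have h1' : |U F G (2^k) x y - Ilim F G x y| ≤ (2 / (1 - (2:ℝ) ^ (1-γ))) * C' * (y-x) ^ γ := by
    rw [← Real.dist_eq]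
    refine le_trans h1 ?_
    calc (2 * C' * (y-x) ^ γ) * ((2:ℝ) ^ (1-γ)) ^ k / (1 - (2:ℝ) ^ (1-γ))
        ≤ (2 * C' * (y-x) ^ γ) * 1 / (1 - (2:ℝ) ^ (1-γ)) := by gcongr
      _ = (2 / (1 - (2:ℝ) ^ (1-γ))) * C' * (y-x) ^ γ := by ring
  calc |U F G (2^k) x y - F x * (G y - G x)|
      ≤ |U F G (2^k) x y - Ilim F G x y| + |F x * (G y - G x) - Ilim F G x y| := by
        rw [abs_sub_comm (F x * (G y - G x))]
        exact abs_sub_le _ _ _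
    _ ≤ (2 / (1 - (2:ℝ) ^ (1-γ))) * C' * (y-x) ^ γ
        + (2 / (1 - (2:ℝ) ^ (1-γ))) * C' * (y-x) ^ γ := add_le_add h1' h2
    _ = (4 / (1 - (2:ℝ) ^ (1-γ))) * C' * (y-x) ^ γ := by ring

include hγ hC hδ in
lemma Umul_dyadic {N : ℕ} (hN : N ≠ 0) (k : ℕ) {a b : ℝ} (hab : a ≤ b) (ha : 0 ≤ a)
    (hb : b ≤ 1) :
    |U F G (N*2^k) a b - U F G N a b|
      ≤ N * ((4 / (1 - (2:ℝ) ^ (1-γ))) * C' * ((b - a)/N) ^ γ) := by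
  rw [U_split hN (by positivity)]
  have hUN : U F G N a b
      = ∑ i ∈ Finset.range N, F (xp N i a b) * (G (xp N (i+1) a b) - G (xp N i a b)) := rfl
  rw [hUN, ← Finset.sum_sub_distrib]
  refine le_trans (Finset.abs_sum_le_sum_abs _ _) ?_
  have hbd : ∀ i ∈ Finset.range N,
      |U F G (2^k) (xp N i a b) (xp N (i+1) a b)
        - F (xp N i a b) * (G (xp N (i+1) a b) - G (xp N i a b))|
      ≤ (4 / (1 - (2:ℝ) ^ (1-γ))) * C' * ((b - a)/N) ^ γ := by
    intro i hi
    have hi' := Finset.mem_range.mp hi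
    have h1 := xp_mem (Nat.le_of_lt hi') hN hab
    have h2 := xp_mem hi' hN hab
    have := S_bound hγ hC hδ (xp_mono (Nat.le_succ i) hab (N := N))
      (le_trans ha h1.1) (le_trans h2.2 hb) k
    rwa [xp_len hN] at this
  refine le_trans (Finset.sum_le_sum hbd) ?_
  rw [Finset.sum_const, Finset.card_range, nsmul_eq_mul]

include hγ hC hδ in
lemma Ubound {N : ℕ} (hN : N ≠ 0) {a b : ℝ} (hab : a ≤ b) (ha : 0 ≤ a) (hb : b ≤ 1) :
    |U F G N a b - Ilim F G a b|
      ≤ (4 / (1 - (2:ℝ) ^ (1-γ))) * C' * (b-a) ^ γ * (N:ℝ) ^ (1-γ) := by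
  set r := (2:ℝ) ^ (1-γ) with hrdef
  have hrpos := hr0 (γ := γ) hγ
  have hrlt := hr1 (γ := γ) hγ
  have hba : (0:ℝ) ≤ b - a := by linarith
  have hNpos : (0:ℝ) < (N:ℝ) := by positivity
  set A := (4 / (1 - r)) * C' * (b-a) ^ γ * (N:ℝ) ^ (1-γ) with hAdef
  set B := (N:ℝ) * C' * (b-a)^γ + 2 * C' * (b-a)^γ / (1-r) with hBdef
  have hkey : ∀ k : ℕ, |U F G N a b - Ilim F G a b| ≤ A + B * r^k := by
    intro k
    have t1 := Umul_dyadic hγ hC hδ hN k hab ha hb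
    have t2 := Umul hγ hC hδ (N := 2^k) (M := N) (by positivity) hN hab ha hb
    have t3 := Ilim_dyadic_dist hγ hC hδ hab ha hb k
    rw [Real.dist_eq] at t3
    have hA1 : (N:ℝ) * ((4 / (1 - r)) * C' * ((b - a)/N) ^ γ) = A := by
      have := arith (B := (4 / (1 - r)) * C') (γ := γ) hγ hba hNpos
      rw [hAdef, this]; try ring
    have hA2 : ((2^k:ℕ):ℝ) * ((N:ℝ) * C' * ((b - a)/((2^k:ℕ):ℝ)) ^ γ) = (N:ℝ) * C' * (b-a)^γ * r^k := by
      have h := arith (B := (N:ℝ) * C') (γ := γ) hγ hba (by positivity : (0:ℝ) < ((2^k:ℕ):ℝ))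
      push_cast at h ⊢
      rw [h, hrdef, ← rconv hγ]
      try ring
    rw [hA1] at t1
    push_cast at t2 hA2
    rw [hA2] at t2
    have hcomm : U F G (2^k*N) a b = U F G (N*2^k) a b := by rw [mul_comm]
    calc |U F G N a b - Ilim F G a b|
        ≤ |U F G N a b - U F G (N*2^k) a b|
          + (|U F G (N*2^k) a b - U F G (2^k) a b| + |U F G (2^k) a b - Ilim F G a b|) :=
          le_trans (abs_sub_le _ (U F G (N*2^k) a b) _)
            (add_le_add le_rfl (abs_sub_le _ (U F G (2^k) a b) _))
      _ ≤ A + (((N:ℝ) * C' * (b-a)^γ * r^k) + (2 * C' * (b-a)^γ * r^k / (1-r))) := by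
          refine add_le_add ?_ (add_le_add ?_ ?_)
          · rw [abs_sub_comm]; exact t1
          · rw [← hcomm]; exact t2
          · exact t3
      _ = A + B * r^k := by rw [hBdef]; ring
  have hto : Tendsto (fun k : ℕ => A + B * r^k) atTop (nhds A) := by
    have h1 : Tendsto (fun k : ℕ => r^k) atTop (nhds 0) :=
      tendsto_pow_atTop_nhds_zero_of_lt_one hrpos.le hrlt
    have := (h1.const_mul B).const_add A
    simpa using this
  exact ge_of_tendsto' hto hkey

include hγ hC hδ in
lemma U_tendsto {a b : ℝ} (hab : a ≤ b) (ha : 0 ≤ a) (hb : b ≤ 1) :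
    Tendsto (fun N : ℕ => U F G N a b) atTop (nhds (Ilim F G a b)) := by
  rw [tendsto_iff_dist_tendsto_zero]
  have hbd : ∀ᶠ N : ℕ in atTop, dist (U F G N a b) (Ilim F G a b)
      ≤ (4 / (1 - (2:ℝ) ^ (1-γ))) * C' * (b-a) ^ γ * (N:ℝ) ^ (1-γ) := by
    filter_upwards [eventually_ge_atTop 1] with N hN
    rw [Real.dist_eq]
    exact Ubound hγ hC hδ (by omega) hab ha hb
  have hto : Tendsto (fun N : ℕ => (4 / (1 - (2:ℝ) ^ (1-γ))) * C' * (b-a) ^ γ * (N:ℝ) ^ (1-γ))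
      atTop (nhds 0) := by
    have h1 : Tendsto (fun x : ℝ => x ^ (-(γ-1))) atTop (nhds 0) :=
      tendsto_rpow_neg_atTop (by linarith)
    have h2 : Tendsto (fun N : ℕ => ((N:ℝ)) ^ (1-γ)) atTop (nhds 0) := by
      have := h1.comp (tendsto_natCast_atTop_atTop (R := ℝ))
      simpa [Function.comp_def, show -(γ-1) = 1-γ by ring] using this
    simpa using h2.const_mul ((4 / (1 - (2:ℝ) ^ (1-γ))) * C' * (b-a) ^ γ)
  exact squeeze_zero' (Eventually.of_forall (fun _ => dist_nonneg)) hbd hto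

lemma Ilim_self (a : ℝ) : Ilim F G a a = 0 := by
  have h0 : ∀ n : ℕ, U F G (2^n) a a = 0 := by
    intro n
    have hx : ∀ i : ℕ, xp (2^n) i a a = a := by intro i; simp [xp]
    simp [U, hx]
  have hex : ∃ L, Tendsto (fun n => U F G (2^n) a a) atTop (nhds L) :=
    ⟨0, by simpa [h0] using (tendsto_const_nhds : Tendsto (fun _ : ℕ => (0:ℝ)) atTop (nhds 0))⟩
  have h1 : Tendsto (fun n => U F G (2^n) a a) atTop (nhds (Ilim F G a a)) := by
    rw [Ilim, dif_pos hex]; exact hex.choose_spec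
  have h2 : Tendsto (fun n => U F G (2^n) a a) atTop (nhds 0) := by
    simpa [h0] using (tendsto_const_nhds : Tendsto (fun _ : ℕ => (0:ℝ)) atTop (nhds 0))
  exact tendsto_nhds_unique h1 h2

lemma split_at {N j l : ℕ} (hj0 : j ≠ 0) (hjN : j < N) (hl : l ≠ 0) (a b : ℝ) :
    U F G (N*l) a b
      = U F G (j*l) a (xp N j a b) + U F G ((N-j)*l) (xp N j a b) b := by
  have hN : N ≠ 0 := by omega
  have hNl : N*l = j*l + (N-j)*l := by
    rw [← Nat.add_mul]; congr 1; omega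
  have hcN : (N:ℝ) ≠ 0 := Nat.cast_ne_zero.mpr hN
  have hcj : (j:ℝ) ≠ 0 := Nat.cast_ne_zero.mpr hj0
  have hcl : (l:ℝ) ≠ 0 := Nat.cast_ne_zero.mpr hl
  have hcNj : ((N-j:ℕ):ℝ) ≠ 0 := Nat.cast_ne_zero.mpr (by omega)
  have hcast : ((N-j:ℕ):ℝ) = (N:ℝ) - (j:ℝ) := by
    push_cast [Nat.cast_sub (le_of_lt hjN)]; ring
  have hp1 : ∀ i : ℕ, xp (N*l) i a b = xp (j*l) i a (xp N j a b) := by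
    intro i
    simp only [xp]
    push_cast
    field_simp
    ring
  have hp2 : ∀ i : ℕ, xp (N*l) (j*l + i) a b = xp ((N-j)*l) i (xp N j a b) b := by
    intro i
    simp only [xp]
    have hne : (N:ℝ) - (j:ℝ) ≠ 0 := by rw [← hcast]; exact hcNj
    push_cast [Nat.cast_sub (le_of_lt hjN)]
    field_simp
    ring
  rw [U, hNl, Finset.sum_range_add]
  congr 1
  · apply Finset.sum_congr rfl
    intro i _
    rw [← hNl, hp1, hp1]
  · apply Finset.sum_congr rfl
    intro i _
    rw [← hNl, show j*l + i + 1 = j*l + (i+1) from rfl, hp2, hp2]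

include hγ hC hδ in
lemma Ilim_split_rat {N j : ℕ} (hj0 : j ≠ 0) (hjN : j < N) {a b : ℝ} (hab : a ≤ b)
    (ha : 0 ≤ a) (hb : b ≤ 1) :
    Ilim F G a b = Ilim F G a (xp N j a b) + Ilim F G (xp N j a b) b := by
  have hN : N ≠ 0 := by omega
  set c := xp N j a b with hcdef
  have hmem := xp_mem (le_of_lt hjN) hN hab
  have hac : a ≤ c := hmem.1
  have hcb : c ≤ b := hmem.2
  have h0c : 0 ≤ c := le_trans ha hac
  have hc1 : c ≤ 1 := le_trans hcb hb
  have Tb := U_tendsto hγ hC hδ hab ha hb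
  have Tac := U_tendsto hγ hC hδ hac ha hc1
  have Tcb := U_tendsto hγ hC hδ hcb h0c hb
  have mul_to : ∀ m : ℕ, m ≠ 0 → Tendsto (fun l : ℕ => m * l) atTop atTop := by
    intro m hm
    apply tendsto_atTop_mono (fun l => Nat.le_mul_of_pos_left l (by omega))
    exact tendsto_id
  have T1 : Tendsto (fun l : ℕ => U F G (N*l) a b) atTop (nhds (Ilim F G a b)) :=
    Tb.comp (mul_to N hN)
  have T2 : Tendsto (fun l : ℕ => U F G (j*l) a c) atTop (nhds (Ilim F G a c)) :=
    Tac.comp (mul_to j hj0)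
  have T3 : Tendsto (fun l : ℕ => U F G ((N-j)*l) c b) atTop (nhds (Ilim F G c b)) :=
    Tcb.comp (mul_to (N-j) (by omega))
  have heq : ∀ᶠ l : ℕ in atTop, U F G (N*l) a b = U F G (j*l) a c + U F G ((N-j)*l) c b := by
    filter_upwards [eventually_ge_atTop 1] with l hl
    exact split_at hj0 hjN (by omega) a b
  have T1' : Tendsto (fun l : ℕ => U F G (j*l) a c + U F G ((N-j)*l) c b) atTop
      (nhds (Ilim F G a b)) := T1.congr' heq
  exact tendsto_nhds_unique T1' (T2.add T3)

omit hγ hC hδ in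
lemma contAux {S : ℕ → ℝ → ℝ} {L : ℝ → ℝ} {s : Set ℝ} {B r : ℝ} (hr0' : 0 < r) (hr1' : r < 1)
    (hB : 0 ≤ B)
    (hstep : ∀ t ∈ s, ∀ n : ℕ, dist (S n t) (S (n+1) t) ≤ B * r^n)
    (hcont : ∀ n : ℕ, ContinuousOn (S n) s)
    (hlim : ∀ t ∈ s, Tendsto (fun n => S n t) atTop (nhds (L t))) :
    ContinuousOn L s := by
  have hden : (0:ℝ) < 1 - r := by linarith
  have key : ∀ t ∈ s, ∀ m n : ℕ, m ≤ n → dist (S m t) (S n t) ≤ B * r^m / (1-r) := by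
    intro t ht m n hmn
    refine le_trans (dist_le_Ico_sum_of_dist_le hmn (fun {k} _ _ => hstep t ht k)) ?_
    have : ∑ i ∈ Finset.Ico m n, B * r^i = B * ((r^m - r^n)/(1-r)) := by
      rw [← Finset.mul_sum, geom_sum_Ico' (by linarith : r ≠ 1) hmn]
    rw [this]
    calc B * ((r^m - r^n)/(1-r)) ≤ B * (r^m/(1-r)) := by
          gcongr
          linarith [pow_nonneg hr0'.le n]
      _ = B * r^m/(1-r) := by ring
  have hucs : UniformCauchySeqOn S atTop s := by
    rw [Metric.uniformCauchySeqOn_iff]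
    intro ε hε
    have h1 : Tendsto (fun m : ℕ => B * r^m / (1-r)) atTop (nhds 0) := by
      have := (tendsto_pow_atTop_nhds_zero_of_lt_one hr0'.le hr1').const_mul B
      simpa using this.div_const (1-r)
    obtain ⟨N, hN⟩ := (h1.eventually (gt_mem_nhds hε)).exists_forall_of_atTop
    refine ⟨N, fun m hm n hn x hx => ?_⟩
    rcases le_total m n with h | h
    · exact lt_of_le_of_lt (key x hx m n h) (hN m hm)
    · rw [dist_comm]
      exact lt_of_le_of_lt (key x hx n m h) (hN n hn)
  have := hucs.tendstoUniformlyOn_of_tendsto hlim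
  exact this.continuousOn (Eventually.of_forall hcont).frequently

include hγ hC hδ in
lemma cont_left (hF : ContinuousOn F (Icc 0 1)) (hG : ContinuousOn G (Icc 0 1))
    {a b : ℝ} (hab : a ≤ b) (ha : 0 ≤ a) (hb : b ≤ 1) :
    ContinuousOn (fun t => Ilim F G a t) (Icc a b) := by
  have hrpos := hr0 (γ := γ) hγ
  have hrlt := hr1 (γ := γ) hγ
  refine contAux (S := fun n t => U F G (2^n) a t) (B := 2*C') hrpos hrlt (by linarith) ?_ ?_ ?_
  · intro t ht n
    obtain ⟨hat, htb⟩ := ht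
    have h := step_bound hγ hC hδ hat ha (le_trans htb hb) n
    refine le_trans h ?_
    have h1 : (t-a) ^ γ ≤ 1 :=
      Real.rpow_le_one (by linarith) (by linarith [le_trans htb hb]) (by linarith)
    have h2 : (0:ℝ) ≤ ((2:ℝ)^(1-γ))^n := pow_nonneg hrpos.le n
    have h3 := mul_le_mul_of_nonneg_right
      (mul_le_mul_of_nonneg_left h1 (by linarith : (0:ℝ) ≤ 2*C')) h2
    linarith [h3]
  · intro n
    apply continuousOn_finset_sum
    intro i hi
    have hi' := Finset.mem_range.mp hi
    have hmap : ∀ j : ℕ, j ≤ 2^n → Set.MapsTo (fun t => xp (2^n) j a t) (Icc a b) (Icc 0 1) := by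
      intro j hj t ht
      obtain ⟨hat, htb⟩ := ht
      have := xp_mem hj (by positivity) hat
      exact ⟨le_trans ha this.1, le_trans this.2 (le_trans htb hb)⟩
    have hφ : ∀ j : ℕ, Continuous (fun t => xp (2^n) j a t) := by
      intro j
      unfold xp
      fun_prop
    have hFc : ∀ j : ℕ, j ≤ 2^n → ContinuousOn (fun t => F (xp (2^n) j a t)) (Icc a b) :=
      fun j hj => hF.comp (hφ j).continuousOn (hmap j hj)
    have hGc : ∀ j : ℕ, j ≤ 2^n → ContinuousOn (fun t => G (xp (2^n) j a t)) (Icc a b) :=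
      fun j hj => hG.comp (hφ j).continuousOn (hmap j hj)
    exact (hFc i (le_of_lt hi')).mul ((hGc (i+1) hi').sub (hGc i (le_of_lt hi')))
  · intro t ht
    exact Ilim_tendsto hγ hC hδ ht.1 ha (le_trans ht.2 hb)

include hγ hC hδ in
lemma cont_right (hF : ContinuousOn F (Icc 0 1)) (hG : ContinuousOn G (Icc 0 1))
    {a b : ℝ} (hab : a ≤ b) (ha : 0 ≤ a) (hb : b ≤ 1) :
    ContinuousOn (fun t => Ilim F G t b) (Icc a b) := by
  have hrpos := hr0 (γ := γ) hγ
  have hrlt := hr1 (γ := γ) hγ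
  refine contAux (S := fun n t => U F G (2^n) t b) (B := 2*C') hrpos hrlt (by linarith) ?_ ?_ ?_
  · intro t ht n
    obtain ⟨hat, htb⟩ := ht
    have h := step_bound hγ hC hδ htb (le_trans ha hat) hb n
    refine le_trans h ?_
    have h1 : (b-t) ^ γ ≤ 1 :=
      Real.rpow_le_one (by linarith) (by linarith [le_trans ha hat]) (by linarith)
    have h2 : (0:ℝ) ≤ ((2:ℝ)^(1-γ))^n := pow_nonneg hrpos.le n
    have h3 := mul_le_mul_of_nonneg_right
      (mul_le_mul_of_nonneg_left h1 (by linarith : (0:ℝ) ≤ 2*C')) h2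
    linarith [h3]
  · intro n
    apply continuousOn_finset_sum
    intro i hi
    have hi' := Finset.mem_range.mp hi
    have hmap : ∀ j : ℕ, j ≤ 2^n → Set.MapsTo (fun t => xp (2^n) j t b) (Icc a b) (Icc 0 1) := by
      intro j hj t ht
      obtain ⟨hat, htb⟩ := ht
      have := xp_mem hj (by positivity) htb
      exact ⟨le_trans (le_trans ha hat) this.1, le_trans this.2 hb⟩
    have hφ : ∀ j : ℕ, Continuous (fun t => xp (2^n) j t b) := by
      intro j
      unfold xp
      fun_prop
    have hFc : ∀ j : ℕ, j ≤ 2^n → ContinuousOn (fun t => F (xp (2^n) j t b)) (Icc a b) :=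
      fun j hj => hF.comp (hφ j).continuousOn (hmap j hj)
    have hGc : ∀ j : ℕ, j ≤ 2^n → ContinuousOn (fun t => G (xp (2^n) j t b)) (Icc a b) :=
      fun j hj => hG.comp (hφ j).continuousOn (hmap j hj)
    exact (hFc i (le_of_lt hi')).mul ((hGc (i+1) hi').sub (hGc i (le_of_lt hi')))
  · intro t ht
    exact Ilim_tendsto hγ hC hδ ht.2 (le_trans ha ht.1) hb

include hγ hC hδ in
lemma Ilim_add (hF : ContinuousOn F (Icc 0 1)) (hG : ContinuousOn G (Icc 0 1))
    {a b c : ℝ} (ha : 0 ≤ a) (hb : b ≤ 1) (hac : a ≤ c) (hcb : c ≤ b) :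
    Ilim F G a b = Ilim F G a c + Ilim F G c b := by
  rcases eq_or_lt_of_le (le_trans hac hcb) with heq | hab
  · -- a = b, so a = c = b
    have hca : c = a := le_antisymm (by rw [heq]; exact hcb) hac
    rw [← heq, hca, Ilim_self]
    ring
  · -- a < b
    set Φ : ℝ → ℝ := fun t => Ilim F G a t + Ilim F G t b - Ilim F G a b with hΦdef
    have hΦcont : ContinuousOn Φ (Icc a b) :=
      ((cont_left hγ hC hδ hF hG (le_of_lt hab) ha hb).add
        (cont_right hγ hC hδ hF hG (le_of_lt hab) ha hb)).sub continuousOn_const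
    have hΦgrid : ∀ N j : ℕ, N ≠ 0 → j ≤ N → Φ (xp N j a b) = 0 := by
      intro N j hN hj
      rcases Nat.eq_zero_or_pos j with hj0 | hj0
      · subst hj0
        simp only [hΦdef, xp_zero, Ilim_self]
        ring
      rcases eq_or_lt_of_le hj with hjN | hjN
      · subst hjN
        simp only [hΦdef, xp_last hN, Ilim_self]
        ring
      · have := Ilim_split_rat hγ hC hδ (by omega : j ≠ 0) hjN (le_of_lt hab) ha hb
        simp only [hΦdef]
        linarith [this]
    -- now approximate any t ∈ [a,b] by grid points
    have hΦzero : ∀ t ∈ Icc a b, Φ t = 0 := by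
      intro t ht
      obtain ⟨hat, htb⟩ := ht
      have hba : (0:ℝ) < b - a := by linarith
      set τ := (t - a)/(b - a) with hτdef
      have hτ0 : 0 ≤ τ := div_nonneg (by linarith) hba.le
      have hτ1 : τ ≤ 1 := by
        rw [hτdef, div_le_one hba]; linarith
      set seq : ℕ → ℝ := fun N => xp (N+1) (⌊(((N:ℝ)+1) * τ)⌋₊) a b with hseqdef
      have hjle : ∀ N : ℕ, (⌊(((N:ℝ)+1) * τ)⌋₊ : ℕ) ≤ N+1 := by
        intro N
        have h1 : (((N:ℝ)+1) * τ) ≤ ((N:ℝ)+1) := by nlinarith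
        calc ⌊(((N:ℝ)+1) * τ)⌋₊ ≤ ⌊((N:ℝ)+1)⌋₊ := Nat.floor_mono h1
          _ = N+1 := by
              rw [show ((N:ℝ)+1) = ((N+1 : ℕ):ℝ) by push_cast; ring, Nat.floor_natCast]
      have hseqmem : ∀ N, seq N ∈ Icc a b := by
        intro N
        have := xp_mem (hjle N) (by omega) (le_of_lt hab)
        exact ⟨this.1, this.2⟩
      have hseqzero : ∀ N, Φ (seq N) = 0 := fun N => hΦgrid (N+1) _ (by omega) (hjle N)
      have hdist : ∀ N : ℕ, dist (seq N) t ≤ (b-a) * (1/((N:ℝ)+1)) := by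
        intro N
        have hNpos : (0:ℝ) < (N:ℝ)+1 := by positivity
        set J : ℝ := ((⌊(((N:ℝ)+1) * τ)⌋₊ : ℕ):ℝ) with hJdef
        have hfl1 : J ≤ ((N:ℝ)+1) * τ := Nat.floor_le (by positivity)
        have hfl2 : ((N:ℝ)+1) * τ < J + 1 := Nat.lt_floor_add_one _
        have htval : t = a + τ * (b - a) := by
          rw [hτdef]; field_simp; ring
        have hseqval : seq N = a + J/((N:ℝ)+1) * (b - a) := by
          rw [hseqdef]
          simp only [xp, hJdef]
          push_cast
          ring_nf
        have h1 : J/((N:ℝ)+1) ≤ τ := by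
          rw [div_le_iff₀ hNpos]; linarith
        have h2 : τ - J/((N:ℝ)+1) ≤ 1/((N:ℝ)+1) := by
          have h3 : τ ≤ (J+1)/((N:ℝ)+1) := by
            rw [le_div_iff₀ hNpos]; linarith
          have h4 : (J+1)/((N:ℝ)+1) - J/((N:ℝ)+1) = 1/((N:ℝ)+1) := by ring
          linarith
        rw [Real.dist_eq, hseqval, htval,
          show a + J/((N:ℝ)+1) * (b - a) - (a + τ * (b - a))
            = -((τ - J/((N:ℝ)+1)) * (b-a)) by ring, abs_neg,
          abs_of_nonneg (mul_nonneg (by linarith) hba.le)]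
        have := mul_le_mul_of_nonneg_right h2 hba.le
        linarith
      have hto : Tendsto seq atTop (nhds t) := by
        rw [tendsto_iff_dist_tendsto_zero]
        apply squeeze_zero (fun N => dist_nonneg) hdist
        simpa using tendsto_one_div_add_atTop_nhds_zero_nat.const_mul (b-a)
      have hto' : Tendsto seq atTop (nhdsWithin t (Icc a b)) :=
        tendsto_nhdsWithin_of_tendsto_nhds_of_eventually_within _ hto
          (Eventually.of_forall hseqmem)
      have hcomp := (hΦcont t ⟨hat, htb⟩).tendsto.comp hto'
      have hzero : Tendsto (fun N => Φ (seq N)) atTop (nhds 0) := by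
        simpa [hseqzero] using (tendsto_const_nhds : Tendsto (fun _ : ℕ => (0:ℝ)) atTop (nhds 0))
      exact (tendsto_nhds_unique hcomp hzero).symm ▸ rfl
    have hcmem : c ∈ Icc a b := ⟨hac, hcb⟩
    have := hΦzero c hcmem
    simp only [hΦdef] at this
    linarith

end core2

lemma Ilim_eq_zero {a b : ℝ} (h0 : ∀ n : ℕ, U F G (2^n) a b = 0) : Ilim F G a b = 0 := by
  have hex : ∃ L, Tendsto (fun n => U F G (2^n) a b) atTop (nhds L) :=
    ⟨0, by simpa [h0] using (tendsto_const_nhds : Tendsto (fun _ : ℕ => (0:ℝ)) atTop (nhds 0))⟩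
  have h1 : Tendsto (fun n => U F G (2^n) a b) atTop (nhds (Ilim F G a b)) := by
    rw [Ilim, dif_pos hex]; exact hex.choose_spec
  have h2 : Tendsto (fun n => U F G (2^n) a b) atTop (nhds 0) := by
    simpa [h0] using (tendsto_const_nhds : Tendsto (fun _ : ℕ => (0:ℝ)) atTop (nhds 0))
  exact tendsto_nhds_unique h1 h2

lemma Ilim_congr {F' G' : ℝ → ℝ} {a b a' b' : ℝ}
    (h : ∀ n : ℕ, U F G (2^n) a b = U F' G' (2^n) a' b') :
    Ilim F G a b = Ilim F' G' a' b' := by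
  have he : (fun n : ℕ => U F G (2^n) a b) = (fun n : ℕ => U F' G' (2^n) a' b') := funext h
  rw [Ilim, Ilim, he]

section bridge

variable {E : Type*} [NormedAddCommGroup E] [NormedSpace ℝ E]

/-- restriction of a function to the parametrized segment `[p,q]` -/
def lineF (f : E → ℝ) (p q : E) : ℝ → ℝ := fun t => f (p + t • (q - p))

lemma line_mapsTo {D : Set E} {p q : E} (hseg : segment ℝ p q ⊆ D) :
    Set.MapsTo (fun t : ℝ => p + t • (q - p)) (Icc 0 1) D := by
  intro s hs
  apply hseg
  rw [segment_eq_image']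
  exact ⟨s, hs, rfl⟩

lemma lineF_cont {f : E → ℝ} {D : Set E} (hf : ContinuousOn f D) {p q : E}
    (hseg : segment ℝ p q ⊆ D) : ContinuousOn (lineF f p q) (Icc 0 1) := by
  apply hf.comp _ (line_mapsTo hseg)
  exact (continuous_const.add (continuous_id.smul continuous_const)).continuousOn

lemma line_delta {f g : E → ℝ} {D : Set E} {C γ : ℝ} {p q : E}
    (hδ₀ : ∀ p₀ p₁ p₂ : E, p₀ ∈ D → p₁ ∈ D → p₂ ∈ D →
      |(f p₁ - f p₀) * (g p₂ - g p₁)|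
        ≤ C * (max (max ‖p₁ - p₀‖ ‖p₂ - p₀‖) ‖p₂ - p₁‖) ^ γ)
    (hseg : segment ℝ p q ⊆ D) :
    ∀ s t u : ℝ, 0 ≤ s → u ≤ 1 → s ≤ t → t ≤ u →
      |(lineF f p q t - lineF f p q s) * (lineF g p q u - lineF g p q t)|
        ≤ (C * ‖q - p‖ ^ γ) * (u - s) ^ γ := by
  intro s t u hs hu hst htu
  have hm := line_mapsTo hseg
  have hsm : p + s • (q-p) ∈ D := hm ⟨hs, by linarith⟩
  have htm : p + t • (q-p) ∈ D := hm ⟨by linarith, by linarith⟩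
  have hum : p + u • (q-p) ∈ D := hm ⟨by linarith, hu⟩
  have key := hδ₀ _ _ _ hsm htm hum
  have hnorm : ∀ x y : ℝ, x ≤ y → ‖(p + y • (q-p)) - (p + x • (q-p))‖ = (y - x) * ‖q - p‖ := by
    intro x y hxy
    rw [show (p + y • (q-p)) - (p + x • (q-p)) = (y - x) • (q - p) by module, norm_smul,
      Real.norm_eq_abs, abs_of_nonneg (by linarith)]
  rw [hnorm s t hst, hnorm s u (le_trans hst htu), hnorm t u htu] at key
  have hmax : max (max ((t-s) * ‖q-p‖) ((u-s) * ‖q-p‖)) ((u-t) * ‖q-p‖)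
      = (u-s) * ‖q-p‖ := by
    rw [← max_mul_of_nonneg _ _ (norm_nonneg (q-p)), ← max_mul_of_nonneg _ _ (norm_nonneg (q-p)),
      max_eq_right (by linarith : t-s ≤ u-s), max_eq_left (by linarith : u-t ≤ u-s)]
  rw [hmax, Real.mul_rpow (by linarith) (norm_nonneg _)] at key
  refine le_trans key (le_of_eq ?_)
  ring

lemma line_C_nonneg {f g : E → ℝ} {D : Set E} {C γ : ℝ} {p q : E}
    (hδ₀ : ∀ p₀ p₁ p₂ : E, p₀ ∈ D → p₁ ∈ D → p₂ ∈ D →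
      |(f p₁ - f p₀) * (g p₂ - g p₁)|
        ≤ C * (max (max ‖p₁ - p₀‖ ‖p₂ - p₀‖) ‖p₂ - p₁‖) ^ γ)
    (hseg : segment ℝ p q ⊆ D) : 0 ≤ C * ‖q - p‖ ^ γ := by
  have hp : p ∈ D := hseg (left_mem_segment ℝ p q)
  have hq : q ∈ D := hseg (right_mem_segment ℝ p q)
  have key := hδ₀ p p q hp hp hq
  simp only [sub_self, norm_zero, zero_mul, abs_zero, max_self,
    max_eq_right (norm_nonneg (q - p))] at key
  exact key

lemma U_line_left (f g : E → ℝ) (p q : E) (t₀ : ℝ) (n : ℕ) :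
    U (lineF f p (p + t₀ • (q - p))) (lineF g p (p + t₀ • (q - p))) (2^n) 0 1
      = U (lineF f p q) (lineF g p q) (2^n) 0 t₀ := by
  have hvec : ∀ j : ℕ, p + (xp (2^n) j 0 1) • ((p + t₀ • (q-p)) - p)
      = p + (xp (2^n) j 0 t₀) • (q - p) := by
    intro j
    have hsc : xp (2^n) j 0 1 * t₀ = xp (2^n) j 0 t₀ := by simp only [xp]; ring
    rw [← hsc]
    module
  unfold U
  apply Finset.sum_congr rfl
  intro i _
  simp only [lineF]
  rw [hvec i, hvec (i+1)]

lemma U_line_right (f g : E → ℝ) (p q : E) (t₀ : ℝ) (n : ℕ) :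
    U (lineF f (p + t₀ • (q - p)) q) (lineF g (p + t₀ • (q - p)) q) (2^n) 0 1
      = U (lineF f p q) (lineF g p q) (2^n) t₀ 1 := by
  have hvec : ∀ j : ℕ, (p + t₀ • (q-p)) + (xp (2^n) j 0 1) • (q - (p + t₀ • (q-p)))
      = p + (xp (2^n) j t₀ 1) • (q - p) := by
    intro j
    have hsc : t₀ + xp (2^n) j 0 1 * (1 - t₀) = xp (2^n) j t₀ 1 := by simp only [xp]; ring
    rw [← hsc]
    module
  unfold U
  apply Finset.sum_congr rfl
  intro i _
  simp only [lineF]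
  rw [hvec i, hvec (i+1)]

lemma U_line_base (f g : E → ℝ) (p q : E) (n : ℕ) :
    ∑ i ∈ Finset.range (2^n), f (p + ((i:ℝ)/2^n) • (q-p)) *
      (g (p + (((i:ℝ)+1)/2^n) • (q-p)) - g (p + ((i:ℝ)/2^n) • (q-p)))
    = U (lineF f p q) (lineF g p q) (2^n) 0 1 := by
  unfold U
  apply Finset.sum_congr rfl
  intro i _
  have e : ∀ j : ℕ, xp (2^n) j 0 1 = (j:ℝ)/(2:ℝ)^n := by
    intro j
    simp only [xp]
    push_cast
    ring
  simp only [lineF, e]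
  push_cast
  ring_nf

end bridge

end
end YoungAux

open YoungAux Filter Set


/-- Existence of the Young integral as a sewing: let `γ > 1` and let `f, g` be
continuous on `D ⊆ ℝ^d` with `|⟨[p₀p₁p₂], δ(f ∪ δg)⟩| = |(f_{p₁}−f_{p₀})(g_{p₂}−g_{p₁})|
≤ C·diam([p₀p₁p₂])^γ` for all triples of points of `D`. Then for every segment
`[pq] ⊆ D` the Riemann sums of `f dg` along the iterated midpoint (dyadic)
subdivisions of `[pq]` converge; the resulting `1`-germ `I = f dg` is regular
(vanishes on degenerate segments and is additive along segments) and satisfies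
`|f_p(g_q−g_p) − I_{pq}| ≤ c(γ)·C·|q−p|^γ`. -/
theorem young_integral_existence {d : ℕ} (γ : ℝ) (hγ : 1 < γ) :
    ∃ c : ℝ, ∀ (D : Set (Pt d)) (f g : Pt d → ℝ) (C : ℝ),
      ContinuousOn f D → ContinuousOn g D →
      (∀ p₀ p₁ p₂ : Pt d, p₀ ∈ D → p₁ ∈ D → p₂ ∈ D →
        |(f p₁ - f p₀) * (g p₂ - g p₁)|
          ≤ C * (max (max ‖p₁ - p₀‖ ‖p₂ - p₀‖) ‖p₂ - p₁‖) ^ γ) →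
      ∃ I : Pt d → Pt d → ℝ,
        -- convergence of the dyadic Riemann sums to I
        (∀ p q : Pt d, segment ℝ p q ⊆ D →
          Filter.Tendsto (fun n : ℕ =>
            ∑ i ∈ Finset.range (2 ^ n),
              f (p + ((i : ℝ) / 2 ^ n) • (q - p)) *
                (g (p + (((i : ℝ) + 1) / 2 ^ n) • (q - p))
                  - g (p + ((i : ℝ) / 2 ^ n) • (q - p))))
            Filter.atTop (nhds (I p q))) ∧
        -- I is regular: nonatomic …
        (∀ p ∈ D, I p p = 0) ∧
        -- … and additive along segments contained in D
        (∀ p q : Pt d, segment ℝ p q ⊆ D → ∀ t ∈ Set.Icc (0 : ℝ) 1,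
          I p q = I p (p + t • (q - p)) + I (p + t • (q - p)) q) ∧
        -- the sewing bound
        (∀ p q : Pt d, segment ℝ p q ⊆ D →
          |f p * (g q - g p) - I p q| ≤ c * C * ‖q - p‖ ^ γ) := by
  refine ⟨2 / (1 - (2:ℝ) ^ (1-γ)), ?_⟩
  intro D f g C hf hg hδ₀
  refine ⟨fun p q => Ilim (lineF f p q) (lineF g p q) 0 1, ?_, ?_, ?_, ?_⟩
  · -- convergence
    intro p q hseg
    have hC' := line_C_nonneg hδ₀ hseg
    have hδ' := line_delta hδ₀ hseg
    have h := Ilim_tendsto hγ hC' hδ' (by norm_num : (0:ℝ) ≤ 1) le_rfl le_rfl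
    exact h.congr (fun n => (U_line_base f g p q n).symm)
  · -- I p p = 0
    intro p hp
    apply Ilim_eq_zero
    intro n
    simp [U, lineF]
  · -- additivity
    intro p q hseg t₀ ht₀
    obtain ⟨ht0, ht1⟩ := ht₀
    have hC' := line_C_nonneg hδ₀ hseg
    have hδ' := line_delta hδ₀ hseg
    have h1 := Ilim_add hγ hC' hδ' (lineF_cont hf hseg) (lineF_cont hg hseg)
      (le_refl (0:ℝ)) (le_refl (1:ℝ)) ht0 ht1
    have h2 : Ilim (lineF f p (p + t₀ • (q - p))) (lineF g p (p + t₀ • (q - p))) 0 1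
        = Ilim (lineF f p q) (lineF g p q) 0 t₀ :=
      Ilim_congr (U_line_left f g p q t₀)
    have h3 : Ilim (lineF f (p + t₀ • (q - p)) q) (lineF g (p + t₀ • (q - p)) q) 0 1
        = Ilim (lineF f p q) (lineF g p q) t₀ 1 :=
      Ilim_congr (U_line_right f g p q t₀)
    dsimp only
    rw [h2, h3]
    exact h1
  · -- sewing bound
    intro p q hseg
    have hC' := line_C_nonneg hδ₀ hseg
    have hδ' := line_delta hδ₀ hseg
    have hb := Ilim_bound hγ hC' hδ' (by norm_num : (0:ℝ) ≤ 1) le_rfl le_rfl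
    have e0 : lineF f p q 0 = f p := by simp [lineF]
    have e1 : lineF g p q 1 = g q := by simp [lineF]
    have e2 : lineF g p q 0 = g p := by simp [lineF]
    rw [e0, e1, e2, sub_zero, Real.one_rpow] at hb
    dsimp only
    calc |f p * (g q - g p) - Ilim (lineF f p q) (lineF g p q) 0 1|
        ≤ 2 / (1 - (2:ℝ) ^ (1-γ)) * (C * ‖q - p‖ ^ γ) * 1 := hb
      _ = 2 / (1 - (2:ℝ) ^ (1-γ)) * C * ‖q - p‖ ^ γ := by ring
end
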